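/- arXiv:2103.03318 — 5 statements merged into one kernel-verified Lean document; each statement's English description precedes it below -/
import Mathlib

section
/- Let q : ℝ → ℝ^k be continuous with finite energy E(q) < ∞ and suppose the zero set Σ of V is finite and the Hessian of V is positive definite at each point of Σ. Then there exist σ₋, σ₊ ∈ Σ such that q(t) → σ₋ as t → -∞ and q(t) → σ₊ as t → +∞. -/
open MeasureTheory Filter intervalIntegral
open scoped RealInnerProductSpace Topology

noncomputable section

variable {k : ℕ}

/-- Absolutely continuous curve whose (a.e.) derivative is `deriv q`
(the model for `H¹_loc(ℝ, ℝᵏ)` curves). -/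
def AC (q : ℝ → EuclideanSpace ℝ (Fin k)) : Prop :=
  MeasureTheory.LocallyIntegrable (deriv q) volume ∧
    ∀ a b : ℝ, q b - q a = ∫ t in a..b, deriv q t

/-- Energy density `½|q'(t)|² + V(q(t))`. -/
def Ed (V : EuclideanSpace ℝ (Fin k) → ℝ) (q : ℝ → EuclideanSpace ℝ (Fin k)) (t : ℝ) : ℝ :=
  (1 / 2) * ‖deriv q t‖ ^ 2 + V (q t)

/-- Finite energy: the energy density is integrable over `ℝ`. -/
def FiniteEnergy (V : EuclideanSpace ℝ (Fin k) → ℝ) (q : ℝ → EuclideanSpace ℝ (Fin k)) : Prop :=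
  Integrable (Ed V q) volume

/-- The energy `E(q) = ∫ ½|q'|² + V(q)`. -/
def Energy (V : EuclideanSpace ℝ (Fin k) → ℝ) (q : ℝ → EuclideanSpace ℝ (Fin k)) : ℝ :=
  ∫ t, Ed V q t

/-- The space `X(σᵢ, σⱼ)` of finite-energy curves from `σᵢ` to `σⱼ`. -/
def InX (V : EuclideanSpace ℝ (Fin k) → ℝ) (σi σj : EuclideanSpace ℝ (Fin k))
    (q : ℝ → EuclideanSpace ℝ (Fin k)) : Prop :=
  AC q ∧ FiniteEnergy V q ∧ Tendsto q atBot (𝓝 σi) ∧ Tendsto q atTop (𝓝 σj)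

/-- Membership in `H¹(ℝ, ℝᵏ)`. -/
def MemH1 (v : ℝ → EuclideanSpace ℝ (Fin k)) : Prop :=
  AC v ∧ MemLp v 2 volume ∧ MemLp (deriv v) 2 volume

/-- The `H¹(ℝ, ℝᵏ)` norm. -/
def H1norm (v : ℝ → EuclideanSpace ℝ (Fin k)) : ℝ :=
  Real.sqrt ((∫ t, ‖v t‖ ^ 2) + ∫ t, ‖deriv v t‖ ^ 2)

/-!
Integrability of the energy density `½|q'|² + V(q)` gives `|q(t) - q(s)| ≤ ∫ₛᵗ (½|q'|² + V(q)) + (t - s)`,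
so far out `q` moves little over intervals of a fixed short length. Away from `Σ` the potential is
bounded below by some `m > 0` (on a compact ball by continuity, outside it by coercivity), so a stay
at distance `ε` from `Σ` over such an interval would cost energy `≥ m δ` in a tail of the integral.
Hence `dist (q t) Σ → 0`. As `Σ` is finite, the `ε`-balls around its points are disjoint for small
`ε`, and the connected set `q([T, ∞))` must lie in one of them. The case `t → -∞` is the same after
reflecting time.
-/

open Set Metric

section Separation

variable {E : Type*} [MetricSpace E]

theorem Set.Finite.exists_pos_pairwise_le_dist {S : Set E} (hS : S.Finite) :
    ∃ ε > 0, S.Pairwise fun σ σ' => 2 * ε ≤ dist σ σ' := by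
  set P := {p ∈ S ×ˢ S | p.1 ≠ p.2}
  have hP : P.Finite := (hS.prod hS).subset (sep_subset _ _)
  have hsmall : ∀ᶠ ε in 𝓝[>] (0 : ℝ), ∀ p ∈ P, ε ≤ dist p.1 p.2 / 2 := by
    rw [hP.eventually_all]
    exact fun p hp => nhdsWithin_le_nhds (eventually_le_nhds (half_pos (dist_pos.2 hp.2)))
  obtain ⟨ε, hε, hεpos⟩ := (hsmall.and self_mem_nhdsWithin).exists
  refine ⟨ε, hεpos, fun σ hσ σ' hσ' hne => ?_⟩
  linarith [hε (σ, σ') ⟨⟨hσ, hσ'⟩, hne⟩]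

variable {S : Set E} {ε : ℝ}

theorem Set.Pairwise.eq_of_mem_ball (hsep : S.Pairwise fun σ σ' => 2 * ε ≤ dist σ σ')
    {σ σ' x : E} (hσ : σ ∈ S) (hσ' : σ' ∈ S) (hx : x ∈ ball σ ε) (hx' : x ∈ ball σ' ε) :
    σ = σ' := by
  by_contra hne
  exact Set.disjoint_left.1 (ball_disjoint_ball (by linarith [hsep hσ hσ' hne])) hx hx'

theorem IsPreconnected.subset_ball_of_subset_biUnion
    (hsep : S.Pairwise fun σ σ' => 2 * ε ≤ dist σ σ') {A : Set E} (hA : IsPreconnected A)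
    (hcov : A ⊆ ⋃ σ ∈ S, ball σ ε) {σ : E} (hσ : σ ∈ S) (hmeet : (A ∩ ball σ ε).Nonempty) :
    A ⊆ ball σ ε := by
  refine hA.subset_left_of_subset_union isOpen_ball
    (isOpen_biUnion fun _ _ => isOpen_ball) ?_ ?_ hmeet (v := ⋃ σ' ∈ S \ {σ}, ball σ' ε)
  · refine Set.disjoint_iUnion₂_right.2 fun σ' hσ' => ball_disjoint_ball ?_
    linarith [hsep hσ hσ'.1 (Ne.symm hσ'.2)]
  · intro x hx
    obtain ⟨σ', hσ', hxσ'⟩ := Set.mem_iUnion₂.1 (hcov hx)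
    by_cases h : σ' = σ
    · exact Or.inl (h ▸ hxσ')
    · exact Or.inr (Set.mem_iUnion₂.2 ⟨σ', ⟨hσ', h⟩, hxσ'⟩)

theorem exists_tendsto_atTop_of_eventually_dist_lt {q : ℝ → E} (hqc : Continuous q)
    (hS : S.Finite) (hnear : ∀ ε > 0, ∀ᶠ t in atTop, ∃ σ ∈ S, dist (q t) σ < ε) :
    ∃ σ ∈ S, Tendsto q atTop (𝓝 σ) := by
  obtain ⟨ε₀, hε₀, hsep⟩ := hS.exists_pos_pairwise_le_dist
  obtain ⟨T, hT⟩ := eventually_atTop.1 (hnear ε₀ hε₀)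
  obtain ⟨σ, hσ, hqT⟩ := hT T le_rfl
  have hstay : q '' Ici T ⊆ ball σ ε₀ := by
    refine (isPreconnected_Ici.image q hqc.continuousOn).subset_ball_of_subset_biUnion hsep ?_ hσ
      ⟨q T, mem_image_of_mem q self_mem_Ici, hqT⟩
    rintro _ ⟨t, ht, rfl⟩
    obtain ⟨σ', hσ', hσ't⟩ := hT t ht
    exact Set.mem_iUnion₂.2 ⟨σ', hσ', hσ't⟩
  refine ⟨σ, hσ, Metric.tendsto_nhds.2 fun ε hε => ?_⟩
  filter_upwards [hnear _ (lt_min hε hε₀), eventually_ge_atTop T] with t ⟨σ', hσ', ht⟩ hTt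
  have hqt : dist (q t) σ' < ε₀ := ht.trans_le (min_le_right _ _)
  obtain rfl := hsep.eq_of_mem_ball hσ' hσ hqt (hstay (mem_image_of_mem q hTt))
  exact ht.trans_le (min_le_left _ _)

end Separation

section Integrable

variable {E : Type*} {q : ℝ → E} {S : Set E} {f : ℝ → ℝ}

theorem intervalIntegral_le_integral_Ioi (hf : Integrable f) (hf0 : ∀ t, 0 ≤ f t) {s u : ℝ}
    (hsu : s ≤ u) : ∫ v in s..u, f v ≤ ∫ v in Ioi s, f v := by
  rw [intervalIntegral.integral_of_le hsu]
  exact setIntegral_mono_set hf.integrableOn (Eventually.of_forall hf0)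
    Ioc_subset_Ioi_self.eventuallyLE

theorem eventually_exists_dist_lt_of_integrable [PseudoMetricSpace E] (hf : Integrable f)
    (hf0 : ∀ t, 0 ≤ f t)
    (hfar : ∀ ε > 0, ∃ m > 0, ∀ t, (∀ σ ∈ S, ε ≤ dist (q t) σ) → m ≤ f t)
    (hdisp : ∀ s t, s ≤ t → dist (q s) (q t) ≤ (∫ u in s..t, f u) + (t - s)) :
    ∀ ε > 0, ∀ᶠ t in atTop, ∃ σ ∈ S, dist (q t) σ < ε := by
  intro ε hε
  obtain ⟨m, hm, hmf⟩ := hfar (ε / 2) (half_pos hε)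
  set δ := ε / 4 with hδ_def
  have hδ : 0 < δ := by positivity
  have htail := (tendsto_integral_Ioi_zero (f := f) (μ := volume) tendsto_id).eventually
    (gt_mem_nhds (lt_min hδ (mul_pos hm hδ)))
  filter_upwards [htail] with s hs
  change ∫ v in Ioi s, f v < min δ (m * δ) at hs
  by_contra! hfar_s
  have hbound : ∀ u ∈ Icc s (s + δ), m ≤ f u := by
    rintro u ⟨hsu, hus⟩
    refine hmf u fun σ hσ => ?_
    -- over `[s, s + δ]` the curve moves by at most `2δ = ε / 2`
    have hmove := hdisp s u hsu
    linarith [intervalIntegral_le_integral_Ioi hf hf0 hsu, min_le_left δ (m * δ),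
      hfar_s σ hσ, dist_triangle (q s) (q u) σ, hδ_def]
  have hcost : m * δ ≤ ∫ u in s..s + δ, f u := by
    simpa [mul_comm] using intervalIntegral.integral_mono_on (by linarith) intervalIntegrable_const
      hf.intervalIntegrable hbound
  linarith [intervalIntegral_le_integral_Ioi hf hf0 (le_add_of_nonneg_right hδ.le : s ≤ s + δ),
    min_le_right δ (m * δ)]

variable [MetricSpace E]

theorem exists_tendsto_atTop_of_integrable (hqc : Continuous q) (hS : S.Finite)
    (hf : Integrable f) (hf0 : ∀ t, 0 ≤ f t)
    (hfar : ∀ ε > 0, ∃ m > 0, ∀ t, (∀ σ ∈ S, ε ≤ dist (q t) σ) → m ≤ f t)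
    (hdisp : ∀ s t, s ≤ t → dist (q s) (q t) ≤ (∫ u in s..t, f u) + (t - s)) :
    ∃ σ ∈ S, Tendsto q atTop (𝓝 σ) :=
  exists_tendsto_atTop_of_eventually_dist_lt hqc hS
    (eventually_exists_dist_lt_of_integrable hf hf0 hfar hdisp)

theorem exists_tendsto_atBot_of_integrable (hqc : Continuous q) (hS : S.Finite)
    (hf : Integrable f) (hf0 : ∀ t, 0 ≤ f t)
    (hfar : ∀ ε > 0, ∃ m > 0, ∀ t, (∀ σ ∈ S, ε ≤ dist (q t) σ) → m ≤ f t)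
    (hdisp : ∀ s t, s ≤ t → dist (q s) (q t) ≤ (∫ u in s..t, f u) + (t - s)) :
    ∃ σ ∈ S, Tendsto q atBot (𝓝 σ) := by
  have hdisp_neg : ∀ s t, s ≤ t →
      dist (q (-s)) (q (-t)) ≤ (∫ u in s..t, f (-u)) + (t - s) := by
    intro s t hst
    rw [intervalIntegral.integral_comp_neg, dist_comm, ← neg_sub_neg]
    exact hdisp (-t) (-s) (neg_le_neg hst)
  obtain ⟨σ, hσ, h⟩ := exists_tendsto_atTop_of_integrable (hqc.comp continuous_neg) hS
    hf.comp_neg (fun t => hf0 (-t))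
    (fun ε hε => (hfar ε hε).imp fun m hm => ⟨hm.1, fun t => hm.2 (-t)⟩) hdisp_neg
  exact ⟨σ, hσ, by simpa [Function.comp_def] using h.comp tendsto_neg_atBot_atTop⟩

end Integrable

theorem exists_pos_le_of_forall_le_dist {E : Type*} [NormedAddCommGroup E] [ProperSpace E]
    {V : E → ℝ} (hV : Continuous V) {S : Set E} (hpos : ∀ u ∉ S, 0 < V u) {β₀ R₀ : ℝ}
    (hβ₀ : 0 < β₀) (hcoer : ∀ u, R₀ ≤ ‖u‖ → β₀ ≤ V u) {ε : ℝ} (hε : 0 < ε) :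
    ∃ m > 0, ∀ u, (∀ σ ∈ S, ε ≤ dist u σ) → m ≤ V u := by
  set F := {u : E | ∀ σ ∈ S, ε ≤ dist u σ}
  have hF : IsClosed F := by
    simp only [F, ofPred_forall]
    exact isClosed_iInter fun σ => isClosed_iInter fun _ =>
      isClosed_le continuous_const (continuous_id.dist continuous_const)
  have hposK : ∀ u ∈ closedBall 0 R₀ ∩ F, 0 < V u := fun u hu =>
    hpos u fun huS => by linarith [hu.2 u huS, dist_self u]
  obtain ⟨m, hm, hmK⟩ := ((isCompact_closedBall 0 R₀).inter_right hF).exists_forall_le'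
    hV.continuousOn hposK
  refine ⟨min β₀ m, lt_min hβ₀ hm, fun u hu => ?_⟩
  rcases le_or_gt ‖u‖ R₀ with hR | hR
  · exact (min_le_right _ _).trans (hmK u ⟨mem_closedBall_zero_iff.2 hR, hu⟩)
  · exact (min_le_left _ _).trans (hcoer u hR.le)

section Energy

variable {V : EuclideanSpace ℝ (Fin k) → ℝ} {q : ℝ → EuclideanSpace ℝ (Fin k)}

theorem Ed_nonneg (hVnn : ∀ u, 0 ≤ V u) (t : ℝ) : 0 ≤ Ed V q t :=
  add_nonneg (by positivity) (hVnn _)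

theorem norm_deriv_le_Ed_add_one (hVnn : ∀ u, 0 ≤ V u) (t : ℝ) :
    ‖deriv q t‖ ≤ Ed V q t + 1 := by
  unfold Ed
  nlinarith [sq_nonneg (‖deriv q t‖ - 1), hVnn (q t)]

theorem AC.dist_le_integral_Ed_add (hq : AC q) (hE : FiniteEnergy V q) (hVnn : ∀ u, 0 ≤ V u)
    {s t : ℝ} (hst : s ≤ t) : dist (q s) (q t) ≤ (∫ u in s..t, Ed V q u) + (t - s) := by
  rw [dist_comm, dist_eq_norm, hq.2 s t]
  calc ‖∫ u in s..t, deriv q u‖ ≤ ∫ u in s..t, ‖deriv q u‖ :=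
        intervalIntegral.norm_integral_le_integral_norm hst
    _ ≤ ∫ u in s..t, (Ed V q u + 1) :=
        intervalIntegral.integral_mono_on hst (hq.1.integrableOn_isCompact isCompact_uIcc).intervalIntegrable.norm
          (hE.intervalIntegrable.add intervalIntegrable_const)
          fun u _ => norm_deriv_le_Ed_add_one hVnn u
    _ = (∫ u in s..t, Ed V q u) + (t - s) := by
        rw [intervalIntegral.integral_add hE.intervalIntegrable intervalIntegrable_const]
        simp

end Energy

theorem stmt_3_general (V : EuclideanSpace ℝ (Fin k) → ℝ)
    (hV : ContDiff ℝ 2 V) (hVnn : ∀ u, 0 ≤ V u)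
    (S : Set (EuclideanSpace ℝ (Fin k))) (hSfin : S.Finite)
    (hSzero : ∀ u, V u = 0 ↔ u ∈ S)
    (α₀ β₀ R₀ : ℝ) (hβ₀ : 0 < β₀)
    (hcoer : ∀ u : EuclideanSpace ℝ (Fin k), R₀ ≤ ‖u‖ →
      α₀ * ‖u‖ ^ 2 ≤ ⟪gradient V u, u⟫ ∧ β₀ ≤ V u)
    (q : ℝ → EuclideanSpace ℝ (Fin k)) (hqc : Continuous q) (hq : AC q)
    (hE : FiniteEnergy V q) :
    ∃ σm ∈ S, ∃ σp ∈ S,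
      Tendsto q atBot (𝓝 σm) ∧ Tendsto q atTop (𝓝 σp) := by
  have hfar : ∀ ε > 0, ∃ m > 0, ∀ t, (∀ σ ∈ S, ε ≤ dist (q t) σ) → m ≤ Ed V q t := by
    intro ε hε
    obtain ⟨m, hm, hmV⟩ := exists_pos_le_of_forall_le_dist hV.continuous
      (fun u hu => (hVnn u).lt_of_ne fun h => hu ((hSzero u).1 h.symm)) hβ₀
      (fun u hu => (hcoer u hu).2) hε
    exact ⟨m, hm, fun t ht => (hmV _ ht).trans (le_add_of_nonneg_left (by positivity))⟩
  have hdisp := fun s t (hst : s ≤ t) => hq.dist_le_integral_Ed_add hE hVnn hst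
  obtain ⟨σm, hσm, hm⟩ :=
    exists_tendsto_atBot_of_integrable hqc hSfin hE (Ed_nonneg hVnn) hfar hdisp
  obtain ⟨σp, hσp, hp⟩ :=
    exists_tendsto_atTop_of_integrable hqc hSfin hE (Ed_nonneg hVnn) hfar hdisp
  exact ⟨σm, hσm, σp, hσp, hm, hp⟩

theorem stmt_3 (V : EuclideanSpace ℝ (Fin k) → ℝ)
    (hV : ContDiff ℝ 2 V) (hVnn : ∀ u, 0 ≤ V u)
    (S : Set (EuclideanSpace ℝ (Fin k))) (hSfin : S.Finite)
    (hSzero : ∀ u, V u = 0 ↔ u ∈ S)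
    (hhess : ∀ σ ∈ S, ∀ u : EuclideanSpace ℝ (Fin k), u ≠ 0 →
      0 < iteratedFDeriv ℝ 2 V σ ![u, u])
    (α₀ β₀ R₀ : ℝ) (hα₀ : 0 < α₀) (hβ₀ : 0 < β₀) (hR₀ : 0 < R₀)
    (hcoer : ∀ u : EuclideanSpace ℝ (Fin k), R₀ ≤ ‖u‖ →
      α₀ * ‖u‖ ^ 2 ≤ ⟪gradient V u, u⟫ ∧ β₀ ≤ V u)
    (q : ℝ → EuclideanSpace ℝ (Fin k)) (hqc : Continuous q) (hq : AC q)
    (hE : FiniteEnergy V q) :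
    ∃ σm ∈ S, ∃ σp ∈ S,
      Tendsto q atBot (𝓝 σm) ∧ Tendsto q atTop (𝓝 σp) :=
  stmt_3_general V hV hVnn S hSfin hSzero α₀ β₀ R₀ hβ₀ hcoer q hqc hq hE
end
end

section
/- Let σᵢ, σⱼ be zeros of V and let q, q̃ : ℝ → ℝ^k both lie in X(σᵢ, σⱼ), i.e. they are H¹_loc with finite energy E < ∞ and tend to σᵢ at -∞ and σⱼ at +∞. Then q - q̃ belongs to H¹(ℝ, ℝ^k). Conversely, if q ∈ X(σᵢ, σⱼ) and v ∈ H¹(ℝ, ℝ^k), then q + v ∈ X(σᵢ, σⱼ). -/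
/-!
Near a zero `σ` of `V`, Taylor's formula with the positive definite Hessian gives
`c ‖x - σ‖² ≤ V x ≤ C ‖x - σ‖²`. Along a finite-energy curve `q` converging to `σ`, the tail of
`‖q - σ‖²` is therefore dominated by the integrable `V ∘ q`; writing
`q - q̃ = (q - σ) - (q̃ - σ)` on each end shows `q - q̃ ∈ L²`, and the derivatives are in `L²`
because the energy controls them.

Conversely, an `H¹` function `v` is uniformly continuous with `‖v‖²` integrable, so it tends to
`0` at `±∞`; hence `q + v` keeps the limits of `q`, and on the tails
`V (q + v) ≤ C ‖q + v - σ‖² ≤ 2C (‖q - σ‖² + ‖v‖²)` is integrable.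
-/

open MeasureTheory Filter intervalIntegral
open scoped RealInnerProductSpace Topology

noncomputable section

variable {k : ℕ}

open Metric

namespace ContinuousMultilinearMap

variable {E : Type*} [NormedAddCommGroup E] [NormedSpace ℝ E]
  (Q : E [×2]→L[ℝ] ℝ)

lemma apply_const_smul_two (c : ℝ) (u : E) : Q (fun _ => c • u) = c ^ 2 * Q (fun _ => u) := by
  simpa [pow_two] using Q.map_smul_univ (fun _ => c) (fun _ => u)

lemma abs_apply_const_two_le (u : E) : |Q (fun _ => u)| ≤ ‖Q‖ * ‖u‖ ^ 2 := by
  simpa [pow_two] using Q.le_opNorm (fun _ => u)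

/-- Compactness of the unit sphere turns pointwise positivity into uniform coercivity. -/
lemma exists_pos_mul_sq_le [FiniteDimensional ℝ E] (hQ : ∀ u ≠ 0, 0 < Q (fun _ => u)) :
    ∃ m > 0, ∀ u, m * ‖u‖ ^ 2 ≤ Q (fun _ => u) := by
  have hcont : Continuous fun u : E => Q (fun _ => u) := Q.coe_continuous.comp (by fun_prop)
  obtain ⟨m, hm, hmin⟩ := (isCompact_sphere (0 : E) 1).exists_forall_le' hcont.continuousOn
    fun u hu => hQ u (ne_zero_of_mem_unit_sphere ⟨u, hu⟩)
  refine ⟨m, hm, fun u => ?_⟩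
  rcases eq_or_ne u 0 with rfl | hu
  · simp [Q.map_coord_zero (m := fun _ => (0 : E)) 0 rfl]
  have hsphere : ‖u‖⁻¹ • u ∈ sphere (0 : E) 1 :=
    mem_sphere_zero_iff_norm.2 (norm_smul_inv_norm hu)
  have hscale : Q (fun _ => u) = ‖u‖ ^ 2 * Q (fun _ => ‖u‖⁻¹ • u) := by
    rw [apply_const_smul_two, ← mul_assoc, ← mul_pow, mul_inv_cancel₀ (norm_ne_zero_iff.2 hu),
      one_pow, one_mul]
  rw [hscale, mul_comm]
  exact mul_le_mul_of_nonneg_left (hmin _ hsphere) (by positivity)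

end ContinuousMultilinearMap

section Taylor

lemma div_two_le_integral_one_sub_mul {f : ℝ → ℝ} (hf : Continuous f) {a : ℝ}
    (h : ∀ t ∈ Set.Icc (0 : ℝ) 1, a ≤ f t) : a / 2 ≤ ∫ t in 0..1, (1 - t) * f t := by
  have hconst : ∫ t in (0 : ℝ)..1, (1 - t) * a = a / 2 := by
    rw [intervalIntegral.integral_mul_const, intervalIntegral.integral_sub intervalIntegrable_const
      intervalIntegral.intervalIntegrable_id]
    simp; ring
  rw [← hconst]
  exact intervalIntegral.integral_mono_on zero_le_one
    ((by fun_prop : Continuous fun t : ℝ => (1 - t) * a).intervalIntegrable _ _)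
    ((by fun_prop : Continuous fun t : ℝ => (1 - t) * f t).intervalIntegrable _ _)
    fun t ht => mul_le_mul_of_nonneg_left (h t ht) (by linarith [ht.2])

lemma integral_one_sub_mul_le_div_two {f : ℝ → ℝ} (hf : Continuous f) {b : ℝ}
    (h : ∀ t ∈ Set.Icc (0 : ℝ) 1, f t ≤ b) : ∫ t in 0..1, (1 - t) * f t ≤ b / 2 := by
  have := div_two_le_integral_one_sub_mul hf.neg (a := -b) fun t ht => neg_le_neg (h t ht)
  simp only [Pi.neg_apply, mul_neg, intervalIntegral.integral_neg] at this
  linarith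

variable {E : Type*} [NormedAddCommGroup E] [NormedSpace ℝ E] {V : E → ℝ} {σ : E}

lemma map_add_eq_integral_iteratedFDeriv_two (hV : ContDiff ℝ 2 V) (hVσ : V σ = 0)
    (hDσ : fderiv ℝ V σ = 0) (h : E) :
    V (σ + h) = ∫ t in 0..1, (1 - t) * iteratedFDeriv ℝ 2 V (σ + t • h) (fun _ => h) := by
  simpa [Finset.sum_range_succ, hVσ, hDσ] using
    map_add_eq_sum_add_integral_iteratedFDeriv (n := 1) (x := σ) (y := h) fun t _ => hV.contDiffAt

lemma continuous_iteratedFDeriv_two_add_smul (hV : ContDiff ℝ 2 V) (σ h : E) :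
    Continuous fun t : ℝ => iteratedFDeriv ℝ 2 V (σ + t • h) (fun _ => h) :=
  continuous_eval_const _ |>.comp <| (hV.continuous_iteratedFDeriv le_rfl).comp (by fun_prop)

theorem isTheta_sq_norm_sub_of_hessian_pos [FiniteDimensional ℝ E] (hV : ContDiff ℝ 2 V)
    (hVσ : V σ = 0) (hDσ : fderiv ℝ V σ = 0)
    (hpos : ∀ u ≠ 0, 0 < iteratedFDeriv ℝ 2 V σ (fun _ => u)) :
    V =Θ[𝓝 σ] fun x => ‖x - σ‖ ^ 2 := by
  set Q := iteratedFDeriv ℝ 2 V σ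
  obtain ⟨m, hm, hQm⟩ := Q.exists_pos_mul_sq_le hpos
  obtain ⟨r, hr, hclose⟩ := eventually_nhds_iff_ball.1 <|
    (hV.continuous_iteratedFDeriv le_rfl).continuousAt.eventually
      (closedBall_mem_nhds Q (half_pos hm))
  have hhess : ∀ z ∈ ball σ r, ∀ h : E,
      m / 2 * ‖h‖ ^ 2 ≤ iteratedFDeriv ℝ 2 V z (fun _ => h) ∧
        iteratedFDeriv ℝ 2 V z (fun _ => h) ≤ (‖Q‖ + m / 2) * ‖h‖ ^ 2 := by
    intro z hz h
    have hdiff := (iteratedFDeriv ℝ 2 V z - Q).abs_apply_const_two_le h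
    have hsmall : ‖iteratedFDeriv ℝ 2 V z - Q‖ * ‖h‖ ^ 2 ≤ m / 2 * ‖h‖ ^ 2 :=
      mul_le_mul_of_nonneg_right (by simpa [dist_eq_norm] using hclose z hz) (by positivity)
    rw [sub_apply, abs_le] at hdiff
    have hlow := hQm h
    have hup := (abs_le.1 (Q.abs_apply_const_two_le h)).2
    constructor <;> nlinarith
  have hbounds : ∀ x ∈ ball σ r,
      m / 4 * ‖x - σ‖ ^ 2 ≤ V x ∧ V x ≤ (‖Q‖ + m / 2) / 2 * ‖x - σ‖ ^ 2 := by
    intro x hx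
    have hseg : ∀ t ∈ Set.Icc (0 : ℝ) 1, σ + t • (x - σ) ∈ ball σ r := fun t ht =>
      (convex_ball σ r).add_smul_sub_mem (mem_ball_self hr) hx ht
    have hcont := continuous_iteratedFDeriv_two_add_smul hV σ (x - σ)
    have htaylor := map_add_eq_integral_iteratedFDeriv_two hV hVσ hDσ (x - σ)
    rw [add_sub_cancel] at htaylor
    rw [htaylor]
    constructor
    · calc m / 4 * ‖x - σ‖ ^ 2 = m / 2 * ‖x - σ‖ ^ 2 / 2 := by ring
        _ ≤ _ := div_two_le_integral_one_sub_mul hcont fun t ht => (hhess _ (hseg t ht) _).1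
    · calc _ ≤ (‖Q‖ + m / 2) * ‖x - σ‖ ^ 2 / 2 :=
            integral_one_sub_mul_le_div_two hcont fun t ht => (hhess _ (hseg t ht) _).2
        _ = _ := by ring
  refine ⟨.of_bound ((‖Q‖ + m / 2) / 2) ?_, .of_bound (4 / m) ?_⟩ <;>
    filter_upwards [ball_mem_nhds σ hr] with x hx <;> obtain ⟨hlo, hhi⟩ := hbounds x hx <;>
    simp only [Real.norm_of_nonneg (sq_nonneg ‖x - σ‖),
      Real.norm_of_nonneg (le_trans (by positivity) hlo : 0 ≤ V x)]
  · exact hhi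
  · rw [div_mul_eq_mul_div, le_div_iff₀ hm]
    linarith

end Taylor

namespace AC

variable {q w : ℝ → EuclideanSpace ℝ (Fin k)}

lemma intervalIntegrable (h : AC q) (a b : ℝ) : IntervalIntegrable (deriv q) volume a b :=
  (h.1.integrableOn_isCompact isCompact_uIcc).intervalIntegrable

lemma eq_add_integral (h : AC q) : q = fun x => q 0 + ∫ t in 0..x, deriv q t := by
  funext x
  rw [← h.2 0 x, add_sub_cancel]

protected lemma continuous (h : AC q) : Continuous q := by
  rw [h.eq_add_integral]
  exact continuous_const.add (continuous_primitive h.intervalIntegrable 0)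

lemma ae_hasDerivAt (h : AC q) : ∀ᵐ t, HasDerivAt q (deriv q t) t := by
  filter_upwards [LocallyIntegrable.ae_hasDerivAt_integral h.1] with t ht
  simpa only [← h.eq_add_integral] using (ht 0).const_add (q 0)

lemma deriv_add_ae (hq : AC q) (hw : AC w) : deriv (q + w) =ᵐ[volume] deriv q + deriv w := by
  filter_upwards [hq.ae_hasDerivAt, hw.ae_hasDerivAt] with t h1 h2 using (h1.add h2).deriv

lemma deriv_sub_ae (hq : AC q) (hw : AC w) : deriv (q - w) =ᵐ[volume] deriv q - deriv w := by
  filter_upwards [hq.ae_hasDerivAt, hw.ae_hasDerivAt] with t h1 h2 using (h1.sub h2).deriv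

protected lemma add (hq : AC q) (hw : AC w) : AC (q + w) := by
  have hderiv := hq.deriv_add_ae hw
  refine ⟨(hq.1.add hw.1).congr hderiv.symm, fun a b => ?_⟩
  rw [intervalIntegral.integral_congr_ae (g := fun t => deriv q t + deriv w t)
      (hderiv.mono fun t ht _ => ht),
    intervalIntegral.integral_add (hq.intervalIntegrable a b) (hw.intervalIntegrable a b),
    ← hq.2, ← hw.2]
  simp only [Pi.add_apply]
  abel

protected lemma neg (hq : AC q) : AC (-q) := by
  refine ⟨by rw [deriv.neg']; exact hq.1.neg, fun a b => ?_⟩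
  simp only [deriv.neg', intervalIntegral.integral_neg, ← hq.2, Pi.neg_apply]
  abel

protected lemma sub (hq : AC q) (hw : AC w) : AC (q - w) := by
  simpa only [sub_eq_add_neg] using hq.add hw.neg

end AC

namespace FiniteEnergy

variable {V : EuclideanSpace ℝ (Fin k) → ℝ} {q : ℝ → EuclideanSpace ℝ (Fin k)}

lemma integrable_sq_norm_deriv (hE : FiniteEnergy V q) (hq : AC q) (hVnn : ∀ u, 0 ≤ V u) :
    Integrable (fun t => ‖deriv q t‖ ^ 2) volume := by
  refine (hE.const_mul 2).mono' (hq.1.aestronglyMeasurable.norm.pow 2) (.of_forall fun t => ?_)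
  rw [Real.norm_of_nonneg (by positivity)]
  linarith [hVnn (q t), show Ed V q t = 1 / 2 * ‖deriv q t‖ ^ 2 + V (q t) from rfl]

lemma memLp_deriv (hE : FiniteEnergy V q) (hq : AC q) (hVnn : ∀ u, 0 ≤ V u) :
    MemLp (deriv q) 2 volume :=
  (memLp_two_iff_integrable_sq_norm hq.1.aestronglyMeasurable).2
    (hE.integrable_sq_norm_deriv hq hVnn)

lemma integrable_comp (hE : FiniteEnergy V q) (hq : AC q) (hVnn : ∀ u, 0 ≤ V u) :
    Integrable (fun t => V (q t)) volume :=
  (hE.sub ((hE.integrable_sq_norm_deriv hq hVnn).const_mul (1 / 2))).congr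
    (.of_forall fun t => by simp [Ed])

end FiniteEnergy

lemma MeasureTheory.Integrable.tendsto_setIntegral_closedBall_cocompact {g : ℝ → ℝ}
    (hg : Integrable g volume) (δ : ℝ) :
    Tendsto (fun t => ∫ s in closedBall t δ, g s) (cocompact ℝ) (𝓝 0) := by
  have : (cocompact ℝ).IsCountablyGenerated := by
    rw [cocompact_eq_atBot_atTop]; infer_instance
  simp_rw [← integral_indicator isClosed_closedBall.measurableSet]
  rw [← integral_zero ℝ ℝ]
  exact tendsto_integral_filter_of_dominated_convergence (fun s => ‖g s‖)
    (.of_forall fun t => (hg.indicator isClosed_closedBall.measurableSet).1)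
    (.of_forall fun t => .of_forall fun s => norm_indicator_le_norm_self _ _) hg.norm
    (.of_forall fun s => tendsto_const_nhds.congr' <| by
      filter_upwards [(isCompact_closedBall s δ).compl_mem_cocompact] with t ht
      rw [Set.indicator_of_notMem (by rwa [mem_closedBall_comm])])

/-- If `‖f t‖ ≥ ε`, uniform continuity keeps `‖f‖ ≥ ε / 2` on a window of fixed length around
`t`, whose contribution to `∫ ‖f‖²` must vanish at infinity. -/
lemma UniformContinuous.tendsto_cocompact_zero_of_integrable_sq_norm {E : Type*}
    [NormedAddCommGroup E] {f : ℝ → E} (hf : UniformContinuous f)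
    (hint : Integrable (fun t => ‖f t‖ ^ 2) volume) : Tendsto f (cocompact ℝ) (𝓝 0) := by
  rw [Metric.tendsto_nhds]
  intro ε hε
  obtain ⟨δ, hδ, hfδ⟩ := Metric.uniformContinuous_iff.1 hf (ε / 2) (half_pos hε)
  have hwindow := (hint.tendsto_setIntegral_closedBall_cocompact (δ / 2)).eventually
    (gt_mem_nhds (show (0 : ℝ) < (ε / 2) ^ 2 * δ by positivity))
  filter_upwards [hwindow] with t ht
  rw [dist_zero_right]
  by_contra! hft
  have hlow : ∀ s ∈ closedBall t (δ / 2), (ε / 2) ^ 2 ≤ ‖f s‖ ^ 2 := by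
    intro s hs
    have hclose := hfδ (show dist t s < δ by linarith [mem_closedBall'.1 hs])
    rw [dist_eq_norm] at hclose
    have := norm_sub_norm_le (f t) (f s)
    gcongr
    linarith
  have : (ε / 2) ^ 2 * δ ≤ ∫ s in closedBall t (δ / 2), ‖f s‖ ^ 2 :=
    calc (ε / 2) ^ 2 * δ = ∫ _ in closedBall t (δ / 2), (ε / 2) ^ 2 := by
          rw [setIntegral_const, Real.volume_real_closedBall (by positivity), smul_eq_mul]; ring
      _ ≤ _ := setIntegral_mono_on (integrableOn_const measure_closedBall_lt_top.ne)
          hint.integrableOn isClosed_closedBall.measurableSet hlow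
  linarith

namespace MemH1

variable {v : ℝ → EuclideanSpace ℝ (Fin k)}

lemma integrable_sq_norm (hv : MemH1 v) : Integrable (fun t => ‖v t‖ ^ 2) volume :=
  (memLp_two_iff_integrable_sq_norm hv.2.1.aestronglyMeasurable).1 hv.2.1

lemma integrable_sq_norm_deriv (hv : MemH1 v) : Integrable (fun t => ‖deriv v t‖ ^ 2) volume :=
  (memLp_two_iff_integrable_sq_norm hv.2.2.aestronglyMeasurable).1 hv.2.2

/-- AM-GM in the form `‖v'‖ ≤ c + ‖v'‖² / (4c)` replaces Cauchy-Schwarz. -/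
lemma norm_sub_le (hv : MemH1 v) {a b c : ℝ} (hab : a ≤ b) (hc : 0 < c) :
    ‖v b - v a‖ ≤ c * (b - a) + (∫ t, ‖deriv v t‖ ^ 2) / (4 * c) := by
  have hsq := hv.integrable_sq_norm_deriv
  rw [hv.1.2 a b]
  calc ‖∫ t in a..b, deriv v t‖ ≤ ∫ t in a..b, ‖deriv v t‖ :=
        intervalIntegral.norm_integral_le_integral_norm hab
    _ ≤ ∫ t in a..b, (c + ‖deriv v t‖ ^ 2 / (4 * c)) := by
        refine intervalIntegral.integral_mono_on hab (hv.1.intervalIntegrable a b).norm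
          (intervalIntegrable_const.add (hsq.intervalIntegrable.div_const _)) fun t _ => ?_
        have hgap : c + ‖deriv v t‖ ^ 2 / (4 * c) - ‖deriv v t‖
            = (‖deriv v t‖ - 2 * c) ^ 2 / (4 * c) := by field_simp; ring
        linarith [show 0 ≤ (‖deriv v t‖ - 2 * c) ^ 2 / (4 * c) by positivity]
    _ = c * (b - a) + (∫ t in a..b, ‖deriv v t‖ ^ 2) / (4 * c) := by
        rw [intervalIntegral.integral_add intervalIntegrable_const
          (hsq.intervalIntegrable.div_const _), intervalIntegral.integral_const,
          intervalIntegral.integral_div, smul_eq_mul, mul_comm]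
    _ ≤ _ := by
        gcongr
        rw [intervalIntegral.integral_of_le hab]
        exact setIntegral_le_integral hsq (.of_forall fun t => by positivity)

lemma uniformContinuous (hv : MemH1 v) : UniformContinuous v := by
  rw [Metric.uniformContinuous_iff]
  intro ε hε
  set I := ∫ t, ‖deriv v t‖ ^ 2
  have hI : 0 ≤ I := integral_nonneg fun t => by positivity
  set c := I / ε + 1
  have hc : 0 < c := by positivity
  have hIc : I / (4 * c) < ε / 2 := by
    rw [div_lt_div_iff₀ (by positivity) two_pos]
    have : ε * c = I + ε := by rw [mul_add, mul_div_cancel₀ _ hε.ne', mul_one]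
    nlinarith
  have key : ∀ a b, a ≤ b → b - a < ε / (2 * c) → ‖v b - v a‖ < ε := by
    intro a b hab hba
    have : c * (b - a) < ε / 2 := by
      rw [lt_div_iff₀ (by positivity)] at hba
      linarith
    linarith [hv.norm_sub_le hab hc]
  refine ⟨ε / (2 * c), by positivity, fun {a b} hab => ?_⟩
  rw [Real.dist_eq] at hab
  rcases le_total a b with h | h
  · rw [dist_comm, dist_eq_norm]
    exact key a b h (by rw [abs_sub_comm] at hab; exact (le_abs_self _).trans_lt hab)
  · rw [dist_eq_norm]
    exact key b a h ((le_abs_self _).trans_lt hab)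

lemma tendsto_cocompact (hv : MemH1 v) : Tendsto v (cocompact ℝ) (𝓝 0) :=
  hv.uniformContinuous.tendsto_cocompact_zero_of_integrable_sq_norm hv.integrable_sq_norm

end MemH1

lemma sq_norm_add_le {E : Type*} [SeminormedAddCommGroup E] (a b : E) :
    ‖a + b‖ ^ 2 ≤ 2 * (‖a‖ ^ 2 + ‖b‖ ^ 2) := by
  nlinarith [norm_add_le a b, norm_nonneg (a + b), sq_nonneg (‖a‖ - ‖b‖)]

lemma isBigO_sq_norm_add {α E : Type*} [SeminormedAddCommGroup E] (l : Filter α) (f g : α → E) :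
    (fun t => ‖f t + g t‖ ^ 2) =O[l] fun t => ‖f t‖ ^ 2 + ‖g t‖ ^ 2 :=
  .of_bound 2 <| .of_forall fun t => by
    rw [Real.norm_of_nonneg (by positivity), Real.norm_of_nonneg (by positivity)]
    exact sq_norm_add_le _ _

section Transitions

variable {V : EuclideanSpace ℝ (Fin k) → ℝ} {σ σi σj : EuclideanSpace ℝ (Fin k)}
  {q qt v : ℝ → EuclideanSpace ℝ (Fin k)}

lemma integrableAtFilter_sq_norm_sub {l : Filter ℝ} [l.IsMeasurablyGenerated]
    (hσ : (fun x => ‖x - σ‖ ^ 2) =O[𝓝 σ] V) (hq : Continuous q) (hlim : Tendsto q l (𝓝 σ))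
    (hVq : Integrable (fun t => V (q t)) volume) :
    IntegrableAtFilter (fun t => ‖q t - σ‖ ^ 2) l volume :=
  (hσ.comp_tendsto hlim).integrableAtFilter
    ((by fun_prop : Continuous fun t => ‖q t - σ‖ ^ 2).stronglyMeasurableAtFilter _ _)
    (hVq.integrableAtFilter l)

namespace InX

lemma integrableAtFilter_sq_norm_sub_atBot (hq : InX V σi σj q) (hVnn : ∀ u, 0 ≤ V u)
    (hi : (fun x => ‖x - σi‖ ^ 2) =O[𝓝 σi] V) :
    IntegrableAtFilter (fun t => ‖q t - σi‖ ^ 2) atBot volume :=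
  integrableAtFilter_sq_norm_sub hi hq.1.continuous hq.2.2.1 (hq.2.1.integrable_comp hq.1 hVnn)

lemma integrableAtFilter_sq_norm_sub_atTop (hq : InX V σi σj q) (hVnn : ∀ u, 0 ≤ V u)
    (hj : (fun x => ‖x - σj‖ ^ 2) =O[𝓝 σj] V) :
    IntegrableAtFilter (fun t => ‖q t - σj‖ ^ 2) atTop volume :=
  integrableAtFilter_sq_norm_sub hj hq.1.continuous hq.2.2.2 (hq.2.1.integrable_comp hq.1 hVnn)

theorem memH1_sub (hq : InX V σi σj q) (hqt : InX V σi σj qt) (hVnn : ∀ u, 0 ≤ V u)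
    (hi : (fun x => ‖x - σi‖ ^ 2) =O[𝓝 σi] V) (hj : (fun x => ‖x - σj‖ ^ 2) =O[𝓝 σj] V) :
    MemH1 (q - qt) := by
  have hcont := hq.1.continuous.sub hqt.1.continuous
  have hO : ∀ (l : Filter ℝ) σ, (fun t => ‖(q - qt) t‖ ^ 2) =O[l]
      fun t => ‖q t - σ‖ ^ 2 + ‖qt t - σ‖ ^ 2 := fun l σ => by
    simpa only [sub_add_sub_cancel, norm_sub_rev σ, Pi.sub_apply] using
      isBigO_sq_norm_add l (fun t => q t - σ) (fun t => σ - qt t)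
  refine ⟨hq.1.sub hqt.1, (memLp_two_iff_integrable_sq_norm hcont.aestronglyMeasurable).2 ?_,
    ((hq.2.1.memLp_deriv hq.1 hVnn).sub (hqt.2.1.memLp_deriv hqt.1 hVnn)).ae_eq
      (hq.1.deriv_sub_ae hqt.1).symm⟩
  exact (hcont.norm.pow 2).locallyIntegrable.integrable_of_isBigO_atBot_atTop
    (hO _ σi) ((hq.integrableAtFilter_sq_norm_sub_atBot hVnn hi).add
      (hqt.integrableAtFilter_sq_norm_sub_atBot hVnn hi))
    (hO _ σj) ((hq.integrableAtFilter_sq_norm_sub_atTop hVnn hj).add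
      (hqt.integrableAtFilter_sq_norm_sub_atTop hVnn hj))

theorem add_memH1 (hq : InX V σi σj q) (hv : MemH1 v) (hVnn : ∀ u, 0 ≤ V u)
    (hVc : Continuous V) (hi : V =Θ[𝓝 σi] fun x => ‖x - σi‖ ^ 2)
    (hj : V =Θ[𝓝 σj] fun x => ‖x - σj‖ ^ 2) : InX V σi σj (q + v) := by
  have hv0 := hv.tendsto_cocompact
  rw [cocompact_eq_atBot_atTop, tendsto_sup] at hv0
  have hbot : Tendsto (q + v) atBot (𝓝 σi) := by
    rw [← add_zero σi]; exact hq.2.2.1.add hv0.1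
  have htop : Tendsto (q + v) atTop (𝓝 σj) := by
    rw [← add_zero σj]; exact hq.2.2.2.add hv0.2
  have hO : ∀ {l : Filter ℝ} {σ}, V =O[𝓝 σ] (fun x => ‖x - σ‖ ^ 2) →
      Tendsto (q + v) l (𝓝 σ) → (fun t => V ((q + v) t)) =O[l]
        fun t => ‖q t - σ‖ ^ 2 + ‖v t‖ ^ 2 := fun hσ hlim =>
    (hσ.comp_tendsto hlim).trans <| (isBigO_sq_norm_add _ (fun t => q t - _) v).congr_left
      fun t => by simp only [Function.comp, Pi.add_apply, add_sub_right_comm]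
  have hVqv : Integrable (fun t => V ((q + v) t)) volume :=
    (hVc.comp (hq.1.continuous.add hv.1.continuous)).locallyIntegrable
      |>.integrable_of_isBigO_atBot_atTop
      (hO hi.isBigO hbot) ((hq.integrableAtFilter_sq_norm_sub_atBot hVnn hi.symm.isBigO).add
        (hv.integrable_sq_norm.integrableAtFilter _))
      (hO hj.isBigO htop) ((hq.integrableAtFilter_sq_norm_sub_atTop hVnn hj.symm.isBigO).add
        (hv.integrable_sq_norm.integrableAtFilter _))
  have hd : MemLp (deriv (q + v)) 2 volume :=
    ((hq.2.1.memLp_deriv hq.1 hVnn).add hv.2.2).ae_eq (hq.1.deriv_add_ae hv.1).symm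
  exact ⟨hq.1.add hv.1, (((memLp_two_iff_integrable_sq_norm hd.1).1 hd).const_mul _).add hVqv,
    hbot, htop⟩

end InX

end Transitions

theorem stmt_4_general (V : EuclideanSpace ℝ (Fin k) → ℝ)
    (hV : ContDiff ℝ 2 V) (hVnn : ∀ u, 0 ≤ V u)
    (S : Set (EuclideanSpace ℝ (Fin k)))
    (hSzero : ∀ u, V u = 0 ↔ u ∈ S)
    (hhess : ∀ σ ∈ S, ∀ u : EuclideanSpace ℝ (Fin k), u ≠ 0 →
      0 < iteratedFDeriv ℝ 2 V σ ![u, u])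
    (σi σj : EuclideanSpace ℝ (Fin k)) (hσi : σi ∈ S) (hσj : σj ∈ S) :
    (∀ q qt : ℝ → EuclideanSpace ℝ (Fin k),
        InX V σi σj q → InX V σi σj qt → MemH1 (q - qt)) ∧
      (∀ q v : ℝ → EuclideanSpace ℝ (Fin k),
        InX V σi σj q → MemH1 v → InX V σi σj (q + v)) := by
  have hwell : ∀ σ ∈ S, V =Θ[𝓝 σ] fun x => ‖x - σ‖ ^ 2 := fun σ hσ => by
    have hVσ : V σ = 0 := (hSzero σ).2 hσ
    refine isTheta_sq_norm_sub_of_hessian_pos hV hVσ ?_ fun u hu => ?_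
    · exact IsLocalMin.fderiv_eq_zero (.of_forall fun y => hVσ ▸ hVnn y)
    · simpa [Matrix.vec_single_eq_const, Matrix.vecCons_const] using hhess σ hσ u hu
  have hi := hwell σi hσi
  have hj := hwell σj hσj
  exact ⟨fun q qt hq hqt => hq.memH1_sub hqt hVnn hi.symm.isBigO hj.symm.isBigO,
    fun q v hq hv => hq.add_memH1 hv hVnn hV.continuous hi hj⟩

theorem stmt_4 (V : EuclideanSpace ℝ (Fin k) → ℝ)
    (hV : ContDiff ℝ 2 V) (hVnn : ∀ u, 0 ≤ V u)
    (S : Set (EuclideanSpace ℝ (Fin k))) (hSfin : S.Finite)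
    (hSzero : ∀ u, V u = 0 ↔ u ∈ S)
    (hhess : ∀ σ ∈ S, ∀ u : EuclideanSpace ℝ (Fin k), u ≠ 0 →
      0 < iteratedFDeriv ℝ 2 V σ ![u, u])
    (σi σj : EuclideanSpace ℝ (Fin k)) (hσi : σi ∈ S) (hσj : σj ∈ S) :
    (∀ q qt : ℝ → EuclideanSpace ℝ (Fin k),
        InX V σi σj q → InX V σi σj qt → MemH1 (q - qt)) ∧
      (∀ q v : ℝ → EuclideanSpace ℝ (Fin k),
        InX V σi σj q → MemH1 v → InX V σi σj (q + v)) :=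
  stmt_4_general V hV hVnn S hSzero hhess σi σj hσi hσj
end
end

section
/- Let ψ : ℝ → ℝ^k be the piecewise-linear interpolation equal to σ⁻ for t ≤ -1, to σ⁺ for t ≥ 1, and affine in between, where σ⁻ ≠ σ⁺ are zeros of V. Then for every v ∈ H¹(ℝ, ℝ^k), the curve ψ + v has finite energy E(ψ + v) < ∞ and tends to σ⁻ at -∞ and σ⁺ at +∞, i.e. ψ + v ∈ X(σ⁻, σ⁺). -/
open MeasureTheory Filter intervalIntegral
open scoped RealInnerProductSpace Topology

noncomputable section

variable {k : ℕ}

/-- The piecewise affine interpolation between `σm` and `σp`. -/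
def psi (σm σp : EuclideanSpace ℝ (Fin k)) (t : ℝ) : EuclideanSpace ℝ (Fin k) :=
  if t ≤ -1 then σm
  else if t ≤ 1 then ((t + 1) / 2) • σp + ((1 - t) / 2) • σm
  else σp

/-!
Write `q = ψ + v`. Both `ψ` and `v` are primitives of locally integrable functions, hence so is
`q`, and Lebesgue's differentiation theorem identifies `q'` with `ψ' + v' ∈ L²` almost
everywhere. Averaging the fundamental theorem of calculus over `[t, t + 1]` and using AM-GM gives
`|v t| ≤ ε + ε⁻¹ ∫_t^{t+1} (|v|² + |v'|²)`, so `v → 0` at `±∞`.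
Finally a nonnegative `C²` potential vanishes to second order at its zeros, so near `±∞` we have
`V (q t) = O(|v t|²)`, which is integrable.
-/

open Set Asymptotics Metric

theorem ContDiffAt.isBigO_sub_sq_of_fderiv_eq_zero {E F : Type*} [NormedAddCommGroup E]
    [NormedSpace ℝ E] [NormedAddCommGroup F] [NormedSpace ℝ F] {f : E → F} {x : E}
    (hf : ContDiffAt ℝ 2 f x) (hx : fderiv ℝ f x = 0) :
    (fun h => f (x + h) - f x) =O[𝓝 0] fun h => ‖h‖ ^ 2 := by
  obtain ⟨K, t, ht, hK⟩ := (hf.fderiv_right (m := 1) (by norm_num)).exists_lipschitzOnWith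
  have hdiff : ∀ᶠ y in 𝓝 x, DifferentiableAt ℝ f y :=
    (hf.eventually (by simp)).mono fun y hy => hy.differentiableAt (by norm_num)
  obtain ⟨δ, hδ, hball⟩ := Metric.mem_nhds_iff.1 (inter_mem ht hdiff)
  refine IsBigO.of_bound K ?_
  filter_upwards [ball_mem_nhds (0 : E) hδ] with h hh
  have hsub : closedBall x ‖h‖ ⊆ ball x δ := closedBall_subset_ball (by simpa using hh)
  have hbound : ∀ y ∈ closedBall x ‖h‖, ‖fderiv ℝ f y‖ ≤ K * ‖h‖ := by
    intro y hy
    have hy' := hK.norm_sub_le (hball (hsub hy)).1 (mem_of_mem_nhds ht)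
    rw [hx, sub_zero] at hy'
    exact hy'.trans (mul_le_mul_of_nonneg_left (mem_closedBall_iff_norm.1 hy) K.2)
  calc ‖f (x + h) - f x‖ ≤ K * ‖h‖ * ‖x + h - x‖ :=
        (convex_closedBall x ‖h‖).norm_image_sub_le_of_norm_fderiv_le
          (fun y hy => (hball (hsub hy)).2) hbound (mem_closedBall_self (norm_nonneg h))
          (by simp)
    _ = K * ‖‖h‖ ^ 2‖ := by simp [pow_two, mul_assoc]

theorem isBigO_comp_add_sq_of_eq_zero {E : Type*} [NormedAddCommGroup E] [NormedSpace ℝ E]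
    {V : E → ℝ} (hV : ContDiff ℝ 2 V) (hVnn : ∀ u, 0 ≤ V u) {σ : E} (hσ : V σ = 0) :
    (fun h => V (σ + h)) =O[𝓝 0] fun h => ‖h‖ ^ 2 := by
  have hmin : IsLocalMin V σ := Eventually.of_forall fun u => hσ ▸ hVnn u
  simpa [hσ] using hV.contDiffAt.isBigO_sub_sq_of_fderiv_eq_zero hmin.fderiv_eq_zero

section Primitive

variable {E : Type*} [NormedAddCommGroup E] [NormedSpace ℝ E] {q f : ℝ → E}

theorem eq_add_integral_of_forall_sub_eq_integral
    (hq : ∀ a b, q b - q a = ∫ t in a..b, f t) : q = fun x => q 0 + ∫ t in 0..x, f t :=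
  funext fun x => by rw [← hq 0 x]; abel

theorem continuous_of_forall_sub_eq_integral [CompleteSpace E] (hf : LocallyIntegrable f volume)
    (hq : ∀ a b, q b - q a = ∫ t in a..b, f t) : Continuous q := by
  rw [eq_add_integral_of_forall_sub_eq_integral hq]
  exact continuous_const.add <| continuous_primitive
    (fun a b => (hf.integrableOn_isCompact isCompact_uIcc).intervalIntegrable) 0

theorem deriv_ae_eq_of_forall_sub_eq_integral [CompleteSpace E] (hf : LocallyIntegrable f volume)
    (hq : ∀ a b, q b - q a = ∫ t in a..b, f t) : deriv q =ᵐ[volume] f := by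
  rw [eq_add_integral_of_forall_sub_eq_integral hq]
  filter_upwards [LocallyIntegrable.ae_hasDerivAt_integral hf] with x hx
  exact ((hx 0).const_add (q 0)).deriv

theorem norm_le_setIntegral_Ioc_add_one [CompleteSpace E] (hf : LocallyIntegrable f volume)
    (hq : ∀ a b, q b - q a = ∫ t in a..b, f t) (t : ℝ) :
    ‖q t‖ ≤ ∫ s in Ioc t (t + 1), (‖q s‖ + ‖f s‖) := by
  set I := Ioc t (t + 1)
  have hI : volume.real I = 1 := by simp [I, measureReal_def]
  have hfI : IntegrableOn (fun s => ‖f s‖) I :=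
    ((hf.integrableOn_isCompact isCompact_Icc).mono_set Ioc_subset_Icc_self).norm
  have hqI : IntegrableOn (fun s => ‖q s‖) I :=
    ((continuous_of_forall_sub_eq_integral hf hq).norm.integrableOn_Icc).mono_set
      Ioc_subset_Icc_self
  have hconst : IntegrableOn (fun _ => ∫ r in I, ‖f r‖) I := integrableOn_const (by simp [I])
  have hpt : ∀ s ∈ I, ‖q t‖ ≤ ‖q s‖ + ∫ r in I, ‖f r‖ := by
    intro s hs
    calc ‖q t‖ ≤ ‖q s‖ + ‖q s - q t‖ := norm_le_norm_add_norm_sub _ _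
      _ ≤ ‖q s‖ + ∫ r in I, ‖f r‖ := by
        gcongr
        rw [hq t s]
        refine intervalIntegral.norm_integral_le_integral_norm_uIoc.trans ?_
        rw [uIoc_of_le hs.1.le]
        exact setIntegral_mono_set hfI (Eventually.of_forall fun _ => norm_nonneg _)
          (Ioc_subset_Ioc_right hs.2).eventuallyLE
  calc ‖q t‖ = ∫ _ in I, ‖q t‖ := by simp [hI]
    _ ≤ ∫ s in I, (‖q s‖ + ∫ r in I, ‖f r‖) :=
      setIntegral_mono_on (integrableOn_const (by simp [I])) (hqI.add hconst) measurableSet_Ioc hpt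
    _ = ∫ s in I, (‖q s‖ + ‖f s‖) := by
      rw [MeasureTheory.integral_add hqI hconst, MeasureTheory.integral_add hqI hfI]
      simp [hI]

theorem tendsto_setIntegral_Ioc_add_one_cocompact {h : ℝ → E} (hh : Integrable h volume) :
    Tendsto (fun t => ∫ s in Ioc t (t + 1), h s) (cocompact ℝ) (𝓝 0) := by
  simp_rw [← MeasureTheory.integral_indicator measurableSet_Ioc]
  rw [← integral_zero ℝ E, cocompact_eq_atBot_atTop]
  refine tendsto_integral_filter_of_dominated_convergence (fun s => ‖h s‖)
    (Eventually.of_forall fun t => (hh.indicator measurableSet_Ioc).aestronglyMeasurable)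
    (Eventually.of_forall fun t => Eventually.of_forall fun s => norm_indicator_le_norm_self h s)
    hh.norm (Eventually.of_forall fun s => tendsto_const_nhds.congr' ?_)
  rw [← cocompact_eq_atBot_atTop]
  filter_upwards [(isCompact_Icc (a := s - 1) (b := s)).compl_mem_cocompact] with t ht
  refine (indicator_of_notMem (fun hs => ht ⟨?_, hs.1.le⟩) _).symm
  linarith [hs.2]

theorem tendsto_cocompact_zero_of_forall_sub_eq_integral [CompleteSpace E]
    (hf : LocallyIntegrable f volume) (hq : ∀ a b, q b - q a = ∫ t in a..b, f t)
    (hq2 : MemLp q 2 volume) (hf2 : MemLp f 2 volume) :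
    Tendsto q (cocompact ℝ) (𝓝 0) := by
  have hH : Integrable (fun s => ‖q s‖ ^ 2 + ‖f s‖ ^ 2) volume :=
    (hq2.integrable_norm_pow two_ne_zero).add (hf2.integrable_norm_pow two_ne_zero)
  rw [NormedAddGroup.tendsto_nhds_zero]
  intro ε hε
  filter_upwards [(tendsto_setIntegral_Ioc_add_one_cocompact hH).eventually
    (gt_mem_nhds (by positivity : 0 < ε ^ 2 / 2))] with t ht
  set I := Ioc t (t + 1)
  have hc : IntegrableOn (fun _ => ε / 2) I := integrableOn_const (by simp [I])
  have hHI : IntegrableOn (fun s => ε / 2 + (‖q s‖ ^ 2 + ‖f s‖ ^ 2) / ε) I :=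
    hc.add (hH.integrableOn.div_const ε)
  have amgm : ∀ x : ℝ, x ≤ ε / 4 + x ^ 2 / ε := fun x => by
    have : ε / 4 + x ^ 2 / ε - x = (x - ε / 2) ^ 2 / ε := by field_simp; ring
    linarith [this ▸ (by positivity : 0 ≤ (x - ε / 2) ^ 2 / ε)]
  have hamgm : ∀ s, ‖q s‖ + ‖f s‖ ≤ ε / 2 + (‖q s‖ ^ 2 + ‖f s‖ ^ 2) / ε := fun s => by
    linarith [add_div (‖q s‖ ^ 2) (‖f s‖ ^ 2) ε, amgm ‖q s‖, amgm ‖f s‖]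
  calc ‖q t‖ ≤ ∫ s in I, (‖q s‖ + ‖f s‖) := norm_le_setIntegral_Ioc_add_one hf hq t
    _ ≤ ∫ s in I, (ε / 2 + (‖q s‖ ^ 2 + ‖f s‖ ^ 2) / ε) :=
      integral_mono_of_nonneg (Eventually.of_forall fun _ => by positivity) hHI
        (Eventually.of_forall hamgm)
    _ = ε / 2 + (∫ s in I, (‖q s‖ ^ 2 + ‖f s‖ ^ 2)) / ε := by
      rw [MeasureTheory.integral_add hc (hH.integrableOn.div_const ε),
        MeasureTheory.integral_div ε fun s => ‖q s‖ ^ 2 + ‖f s‖ ^ 2]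
      simp [I, measureReal_def]
    _ < ε / 2 + ε ^ 2 / 2 / ε := by gcongr
    _ = ε := by field_simp; ring

end Primitive

theorem AC.of_forall_sub_eq_integral {q f : ℝ → EuclideanSpace ℝ (Fin k)}
    (hf : LocallyIntegrable f volume) (hq : ∀ a b, q b - q a = ∫ t in a..b, f t) : AC q := by
  have hd := deriv_ae_eq_of_forall_sub_eq_integral hf hq
  refine ⟨hf.congr hd.symm, fun a b => ?_⟩
  rw [hq, integral_congr_ae (hd.mono fun t ht _ => ht.symm)]

section Psi

variable (σm σp : EuclideanSpace ℝ (Fin k))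

def psiDeriv : ℝ → EuclideanSpace ℝ (Fin k) :=
  (Ico (-1 : ℝ) 1).indicator fun _ => (2 : ℝ)⁻¹ • (σp - σm)

theorem psi_of_le_neg_one {t : ℝ} (ht : t ≤ -1) : psi σm σp t = σm := if_pos ht

theorem psi_of_one_le {t : ℝ} (ht : 1 ≤ t) : psi σm σp t = σp := by
  rcases ht.eq_or_lt with rfl | ht
  · norm_num [psi]
  · simp [psi, ht.not_ge, (show ¬t ≤ -1 by linarith)]

theorem psi_of_mem_Icc {t : ℝ} (ht : t ∈ Icc (-1) 1) :
    psi σm σp t = ((t + 1) / 2) • σp + ((1 - t) / 2) • σm := by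
  rcases ht.1.eq_or_lt with rfl | h
  · norm_num [psi]
  · simp [psi, h.not_ge, ht.2]

theorem psi_eventuallyEq_atBot : psi σm σp =ᶠ[atBot] fun _ => σm := by
  filter_upwards [eventually_le_atBot (-1)] with t ht using psi_of_le_neg_one σm σp ht

theorem psi_eventuallyEq_atTop : psi σm σp =ᶠ[atTop] fun _ => σp := by
  filter_upwards [eventually_ge_atTop 1] with t ht using psi_of_one_le σm σp ht

theorem continuous_psi : Continuous (psi σm σp) := by
  have hA : Continuous fun t : ℝ => ((t + 1) / 2) • σp + ((1 - t) / 2) • σm := by fun_prop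
  refine continuous_const.if_le (hA.if_le continuous_const continuous_id continuous_const ?_)
    continuous_id continuous_const ?_
  · rintro t rfl
    norm_num
  · rintro t rfl
    norm_num

theorem hasDerivWithinAt_psi_Ioi (t : ℝ) :
    HasDerivWithinAt (psi σm σp) (psiDeriv σm σp t) (Ioi t) t := by
  rcases lt_or_ge t (-1) with h | h
  · rw [psiDeriv, indicator_of_notMem (fun hc => h.not_ge hc.1)]
    refine ((hasDerivAt_const t σm).congr_of_eventuallyEq ?_).hasDerivWithinAt
    filter_upwards [Iio_mem_nhds h] with y hy using psi_of_le_neg_one σm σp hy.le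
  rcases lt_or_ge t 1 with h' | h'
  · rw [psiDeriv, indicator_of_mem (show t ∈ Ico (-1) 1 from ⟨h, h'⟩)]
    have hA : HasDerivAt (fun t : ℝ => ((t + 1) / 2) • σp + ((1 - t) / 2) • σm)
        ((2 : ℝ)⁻¹ • (σp - σm)) t := by
      have hp := (((hasDerivAt_id t).add_const 1).div_const 2).smul_const σp
      have hm := (((hasDerivAt_id t).const_sub 1).div_const 2).smul_const σm
      exact (hp.add hm).congr_deriv (by module)
    refine hA.hasDerivWithinAt.congr_of_eventuallyEq ?_ (psi_of_mem_Icc σm σp ⟨h, h'.le⟩)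
    filter_upwards [Ioo_mem_nhdsGT h'] with y hy
      using psi_of_mem_Icc σm σp ⟨h.trans hy.1.le, hy.2.le⟩
  · rw [psiDeriv, indicator_of_notMem (fun hc => hc.2.not_ge h')]
    refine (hasDerivWithinAt_const t _ σp).congr_of_eventuallyEq ?_ (psi_of_one_le σm σp h')
    filter_upwards [self_mem_nhdsWithin] with y hy
      using psi_of_one_le σm σp (h'.trans (le_of_lt hy))

theorem integrable_psiDeriv : Integrable (psiDeriv σm σp) volume :=
  (integrableOn_const (by simp)).integrable_indicator measurableSet_Ico

theorem memLp_psiDeriv : MemLp (psiDeriv σm σp) 2 volume :=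
  memLp_indicator_const 2 measurableSet_Ico _ (Or.inr (by simp))

theorem psi_sub_psi_eq_integral (a b : ℝ) :
    psi σm σp b - psi σm σp a = ∫ t in a..b, psiDeriv σm σp t :=
  (integral_eq_sub_of_hasDeriv_right (continuous_psi σm σp).continuousOn
    (fun t _ => hasDerivWithinAt_psi_Ioi σm σp t)
    (integrable_psiDeriv σm σp).intervalIntegrable).symm

theorem integrable_comp_psi_add {V : EuclideanSpace ℝ (Fin k) → ℝ} (hV : ContDiff ℝ 2 V)
    (hVnn : ∀ u, 0 ≤ V u) (hVm : V σm = 0) (hVp : V σp = 0) {v : ℝ → EuclideanSpace ℝ (Fin k)}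
    (hvc : Continuous v) (hv_bot : Tendsto v atBot (𝓝 0)) (hv_top : Tendsto v atTop (𝓝 0))
    (hv2 : Integrable (fun t => ‖v t‖ ^ 2) volume) :
    Integrable (fun t => V (psi σm σp t + v t)) volume := by
  refine (hV.continuous.comp ((continuous_psi σm σp).add hvc)).locallyIntegrable
    |>.integrable_of_isBigO_atBot_atTop (g := fun t => ‖v t‖ ^ 2) ?_ (hv2.integrableAtFilter _)
      (g' := fun t => ‖v t‖ ^ 2) ?_ (hv2.integrableAtFilter _)
  · refine ((isBigO_comp_add_sq_of_eq_zero hV hVnn hVm).comp_tendsto hv_bot).congr' ?_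
      EventuallyEq.rfl
    filter_upwards [psi_eventuallyEq_atBot σm σp] with t ht
    simp [ht]
  · refine ((isBigO_comp_add_sq_of_eq_zero hV hVnn hVp).comp_tendsto hv_top).congr' ?_
      EventuallyEq.rfl
    filter_upwards [psi_eventuallyEq_atTop σm σp] with t ht
    simp [ht]

end Psi

theorem stmt_5_general (V : EuclideanSpace ℝ (Fin k) → ℝ)
    (hV : ContDiff ℝ 2 V) (hVnn : ∀ u, 0 ≤ V u)
    (S : Set (EuclideanSpace ℝ (Fin k)))
    (hSzero : ∀ u, V u = 0 ↔ u ∈ S)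
    (σm σp : EuclideanSpace ℝ (Fin k)) (hσm : σm ∈ S) (hσp : σp ∈ S)
    (v : ℝ → EuclideanSpace ℝ (Fin k)) (hv : MemH1 v) :
    InX V σm σp (fun t => psi σm σp t + v t) := by
  obtain ⟨⟨hv'_loc, hv_ftc⟩, hv2, hv'2⟩ := hv
  have hloc : LocallyIntegrable (fun t => psiDeriv σm σp t + deriv v t) volume :=
    (integrable_psiDeriv σm σp).locallyIntegrable.add hv'_loc
  have hftc : ∀ a b, (psi σm σp b + v b) - (psi σm σp a + v a) =
      ∫ t in a..b, (psiDeriv σm σp t + deriv v t) := fun a b => by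
    rw [integral_add (integrable_psiDeriv σm σp).intervalIntegrable
      (hv'_loc.integrableOn_isCompact isCompact_uIcc).intervalIntegrable,
      ← psi_sub_psi_eq_integral, ← hv_ftc]
    abel
  have hv0 := tendsto_cocompact_zero_of_forall_sub_eq_integral hv'_loc hv_ftc hv2 hv'2
  rw [cocompact_eq_atBot_atTop, tendsto_sup] at hv0
  refine ⟨AC.of_forall_sub_eq_integral hloc hftc, ?_, ?_, ?_⟩
  · have hq'2 : Integrable (fun t => ‖deriv (fun t => psi σm σp t + v t) t‖ ^ 2) volume :=
      (((memLp_psiDeriv σm σp).add hv'2).ae_eq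
        (deriv_ae_eq_of_forall_sub_eq_integral hloc hftc).symm).integrable_norm_pow two_ne_zero
    exact (hq'2.const_mul _).add <| integrable_comp_psi_add σm σp hV hVnn ((hSzero σm).2 hσm)
      ((hSzero σp).2 hσp) (continuous_of_forall_sub_eq_integral hv'_loc hv_ftc) hv0.1 hv0.2
      (hv2.integrable_norm_pow two_ne_zero)
  · simpa using (tendsto_nhds_of_eventually_eq (psi_eventuallyEq_atBot σm σp)).add hv0.1
  · simpa using (tendsto_nhds_of_eventually_eq (psi_eventuallyEq_atTop σm σp)).add hv0.2

theorem stmt_5 (V : EuclideanSpace ℝ (Fin k) → ℝ)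
    (hV : ContDiff ℝ 2 V) (hVnn : ∀ u, 0 ≤ V u)
    (S : Set (EuclideanSpace ℝ (Fin k))) (hSfin : S.Finite)
    (hSzero : ∀ u, V u = 0 ↔ u ∈ S)
    (hhess : ∀ σ ∈ S, ∀ u : EuclideanSpace ℝ (Fin k), u ≠ 0 →
      0 < iteratedFDeriv ℝ 2 V σ ![u, u])
    (σm σp : EuclideanSpace ℝ (Fin k)) (hσm : σm ∈ S) (hσp : σp ∈ S) (hne : σm ≠ σp)
    (v : ℝ → EuclideanSpace ℝ (Fin k)) (hv : MemH1 v) :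
    InX V σm σp (fun t => psi σm σp t + v t) :=
  stmt_5_general V hV hVnn S hSzero σm σp hσm hσp v hv
end
end

section
/- There exists η_min > 0, depending only on V, such that any solution q : ℝ → ℝ^k of q'' = ∇V(q) connecting two wells (i.e. q ∈ X(σᵢ, σⱼ) for some zeros σᵢ, σⱼ of V) satisfies either E(q) ≥ η_min or q is constant. -/
/-!
Near a nondegenerate well `σ` the Hessian of `V` is positive semidefinite on a ball `B(σ, r)`, so
`⟪∇V(u), u - σ⟫ ≥ 0` there. Along a solution of `q'' = ∇V(q)` that stays in this ball,
`t ↦ ⟪q - σ, q'⟫` is then nondecreasing (its derivative is `‖q'‖² + ⟪q - σ, ∇V(q)⟫`) and square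
integrable, hence zero, which forces `q' = 0`. A nonconstant finite-energy solution leaving `σ`
at `-∞` must therefore cross the annulus `r/2 ≤ |u - σ| ≤ r`, on which `V ≥ δ > 0`, and this costs
energy at least `√(2δ) r / 2`. As there are finitely many wells, the minimum of these bounds works.
-/

open MeasureTheory Filter intervalIntegral
open scoped RealInnerProductSpace Topology

noncomputable section

variable {k : ℕ}

theorem Monotone.eq_zero_of_integrable_sq {f : ℝ → ℝ} (hf : Monotone f)
    (hf2 : Integrable (fun t => f t ^ 2)) (t : ℝ) : f t = 0 := by
  by_contra hne
  have hfin := hf2.measure_norm_ge_lt_top (ε := f t ^ 2) (by positivity)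
  have hsq : ∀ s, f t ^ 2 ≤ f s ^ 2 → s ∈ {s | f t ^ 2 ≤ ‖f s ^ 2‖} := fun s h => by
    simpa [abs_of_nonneg (sq_nonneg (f s))] using h
  rcases lt_or_gt_of_ne hne with hneg | hpos
  · have : Set.Iic t ⊆ {s | f t ^ 2 ≤ ‖f s ^ 2‖} := fun s hs =>
      hsq s (by nlinarith [hf (Set.mem_Iic.mp hs)])
    exact (measure_mono this).trans_lt hfin |>.ne (by simp)
  · have : Set.Ici t ⊆ {s | f t ^ 2 ≤ ‖f s ^ 2‖} := fun s hs =>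
      hsq s (by nlinarith [hf (Set.mem_Ici.mp hs)])
    exact (measure_mono this).trans_lt hfin |>.ne (by simp)

theorem Continuous.exists_Icc_mapsTo_Icc {g : ℝ → ℝ} (hg : Continuous g) {t₀ t₁ ρ₁ ρ₂ : ℝ}
    (ht : t₀ ≤ t₁) (hρ : ρ₁ ≤ ρ₂) (h₀ : g t₀ ≤ ρ₁) (h₁ : ρ₂ ≤ g t₁) :
    ∃ a b, a ≤ b ∧ g a = ρ₁ ∧ g b = ρ₂ ∧ Set.MapsTo g (Set.Icc a b) (Set.Icc ρ₁ ρ₂) := by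
  -- `b` is the first time after `t₀` at which `g` reaches `ρ₂`, and `a` the last time before `b`
  -- at which `g` is at most `ρ₁`; both values are attained by the intermediate value theorem.
  set B := {t ∈ Set.Icc t₀ t₁ | ρ₂ ≤ g t}
  have hB : IsClosed B := isClosed_Icc.inter (isClosed_le continuous_const hg)
  have hBne : B.Nonempty := ⟨t₁, ⟨ht, le_rfl⟩, h₁⟩
  have hBbdd : BddBelow B := ⟨t₀, fun _ h => h.1.1⟩
  obtain ⟨⟨ht₀b, hbt₁⟩, hgb⟩ := hB.csInf_mem hBne hBbdd
  set b := sInf B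
  obtain ⟨c, hc, hgc⟩ := intermediate_value_Icc ht₀b hg.continuousOn ⟨h₀.trans hρ, hgb⟩
  have hcb : c = b := le_antisymm hc.2 (csInf_le hBbdd ⟨⟨hc.1, hc.2.trans hbt₁⟩, hgc.ge⟩)
  subst hcb
  set A := {t ∈ Set.Icc t₀ b | g t ≤ ρ₁}
  have hA : IsClosed A := isClosed_Icc.inter (isClosed_le hg continuous_const)
  have hAne : A.Nonempty := ⟨t₀, ⟨le_rfl, ht₀b⟩, h₀⟩
  have hAbdd : BddAbove A := ⟨b, fun _ h => h.1.2⟩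
  obtain ⟨⟨ht₀a, hac⟩, hga⟩ := hA.csSup_mem hAne hAbdd
  set a := sSup A
  obtain ⟨d, hd, hgd⟩ := intermediate_value_Icc hac hg.continuousOn ⟨hga, hgc ▸ hρ⟩
  have hda : d = a := le_antisymm (le_csSup hAbdd ⟨⟨ht₀a.trans hd.1, hd.2⟩, hgd.le⟩) hd.1
  subst hda
  refine ⟨a, b, hac, hgd, hgc, fun t ht => ⟨?_, ?_⟩⟩
  · by_contra! hlt
    have : t ≤ a := le_csSup hAbdd ⟨⟨ht₀a.trans ht.1, ht.2⟩, hlt.le⟩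
    rw [le_antisymm this ht.1] at hlt
    exact hlt.ne hgd
  · by_contra! hgt
    have : b ≤ t := csInf_le hBbdd ⟨⟨ht₀a.trans ht.1, ht.2.trans hbt₁⟩, hgt.le⟩
    rw [le_antisymm ht.2 this] at hgt
    exact hgt.ne' hgc

section Hessian

variable {F : Type*} [NormedAddCommGroup F] [NormedSpace ℝ F]

theorem ContinuousLinearMap.exists_pos_mul_sq_le_of_pos [FiniteDimensional ℝ F]
    (B : F →L[ℝ] F →L[ℝ] ℝ) (hB : ∀ v ≠ 0, 0 < B v v) :
    ∃ m > 0, ∀ v, m * ‖v‖ ^ 2 ≤ B v v := by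
  obtain ⟨m, hm, hmB⟩ := (isCompact_sphere (0 : F) 1).exists_forall_le'
    (f := fun w => B w w) (by fun_prop) (a := 0)
    (fun w hw => hB w (ne_zero_of_mem_unit_sphere ⟨w, hw⟩))
  refine ⟨m, hm, fun v => ?_⟩
  rcases eq_or_ne v 0 with rfl | hv
  · simp
  have hv' : 0 < ‖v‖ := norm_pos_iff.mpr hv
  have hw := hmB (‖v‖⁻¹ • v) (by simp [norm_smul, hv'.ne'])
  have hscale : B (‖v‖⁻¹ • v) (‖v‖⁻¹ • v) = (‖v‖ ^ 2)⁻¹ * B v v := by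
    simp only [map_smul, smul_apply, smul_eq_mul]
    ring
  rw [hscale, le_inv_mul_iff₀ (by positivity)] at hw
  linarith

theorem eventually_forall_hessian_nonneg [FiniteDimensional ℝ F] {V : F → ℝ}
    (hV : ContDiff ℝ 2 V) {σ : F} (hσ : ∀ v ≠ 0, 0 < iteratedFDeriv ℝ 2 V σ ![v, v]) :
    ∀ᶠ x in 𝓝 σ, ∀ v, 0 ≤ fderiv ℝ (fderiv ℝ V) x v v := by
  set B := fderiv ℝ (fderiv ℝ V)
  have hBc : Continuous B :=
    ((hV.fderiv_right (m := 1) le_rfl).fderiv_right (m := 0) le_rfl).continuous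
  obtain ⟨m, hm, hmB⟩ := (B σ).exists_pos_mul_sq_le_of_pos fun v hv => by
    simpa [iteratedFDeriv_two_apply] using hσ v hv
  filter_upwards [hBc.continuousAt (Metric.ball_mem_nhds (B σ) hm)] with x hx v
  have hx' : ‖B x - B σ‖ < m := dist_eq_norm (B x) (B σ) ▸ hx
  have hdiff := neg_abs_le ((B x - B σ) v v) |>.trans' (neg_le_neg ((B x - B σ).le_opNorm₂ v v))
  calc 0 ≤ (m - ‖B x - B σ‖) * ‖v‖ ^ 2 := mul_nonneg (sub_nonneg.mpr hx'.le) (sq_nonneg _)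
    _ ≤ B σ v v + (B x - B σ) v v := by nlinarith [hmB v]
    _ = B x v v := by simp

theorem fderiv_apply_sub_nonneg_of_hessian_nonneg {V : F → ℝ}
    (hV : Differentiable ℝ (fderiv ℝ V)) {s : Set F} (hs : Convex ℝ s) {σ : F} (hσs : σ ∈ s)
    (hcrit : fderiv ℝ V σ = 0) (hB : ∀ x ∈ s, ∀ v, 0 ≤ fderiv ℝ (fderiv ℝ V) x v v)
    {u : F} (hu : u ∈ s) : 0 ≤ fderiv ℝ V u (u - σ) := by
  set v := u - σ
  set g : ℝ → ℝ := fun t => fderiv ℝ V (σ + t • v) v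
  have hseg : ∀ t ∈ Set.Icc (0 : ℝ) 1, σ + t • v ∈ s := fun t ht =>
    hs.add_smul_sub_mem hσs hu ht
  have hg : ∀ t : ℝ, HasDerivAt g (fderiv ℝ (fderiv ℝ V) (σ + t • v) v v) t := fun t => by
    have hline : HasDerivAt (fun t : ℝ => σ + t • v) v t := by
      simpa using ((hasDerivAt_id t).smul_const v).const_add σ
    simpa using ((hV _).hasFDerivAt.comp_hasDerivAt t hline).clm_apply (hasDerivAt_const t v)
  have hmono : MonotoneOn g (Set.Icc 0 1) :=
    monotoneOn_of_deriv_nonneg (convex_Icc 0 1)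
      (fun t _ => (hg t).continuousAt.continuousWithinAt)
      (fun t _ => (hg t).differentiableAt.differentiableWithinAt)
      (fun t ht => (hg t).deriv ▸ hB _ (hseg t (interior_subset ht)) v)
  have := hmono ⟨le_rfl, zero_le_one⟩ ⟨zero_le_one, le_rfl⟩ zero_le_one
  simpa [g, v, hcrit] using this

end Hessian

section Trapped

variable {F : Type*} [NormedAddCommGroup F] [InnerProductSpace ℝ F]

theorem exists_inner_gradient_sub_nonneg [FiniteDimensional ℝ F] {V : F → ℝ}
    (hV : ContDiff ℝ 2 V) {σ : F} (hmin : IsLocalMin V σ)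
    (hσ : ∀ v ≠ 0, 0 < iteratedFDeriv ℝ 2 V σ ![v, v]) :
    ∃ r > 0, ∀ u ∈ Metric.closedBall σ r, 0 ≤ ⟪gradient V u, u - σ⟫ := by
  obtain ⟨ε, hε, hB⟩ := Metric.eventually_nhds_iff.mp (eventually_forall_hessian_nonneg hV hσ)
  refine ⟨ε / 2, by positivity, fun u hu => ?_⟩
  rw [inner_gradient_left]
  exact fderiv_apply_sub_nonneg_of_hessian_nonneg
    ((hV.fderiv_right (m := 1) le_rfl).differentiable one_ne_zero) (convex_closedBall σ _)
    (Metric.mem_closedBall_self (by positivity)) hmin.fderiv_eq_zero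
    (fun x hx => hB (lt_of_le_of_lt (Metric.mem_closedBall.mp hx) (by linarith))) hu

theorem is_const_of_forall_mem_closedBall [CompleteSpace F] {V : F → ℝ} {q : ℝ → F}
    (hq : ContDiff ℝ 2 q) (hode : ∀ t, deriv (deriv q) t = gradient V (q t))
    (hq' : Integrable (fun t => ‖deriv q t‖ ^ 2)) {σ : F} {r : ℝ}
    (hV : ∀ u ∈ Metric.closedBall σ r, 0 ≤ ⟪gradient V u, u - σ⟫)
    (hqr : ∀ t, q t ∈ Metric.closedBall σ r) (s t : ℝ) : q s = q t := by
  have hq1 : Differentiable ℝ q := hq.differentiable two_ne_zero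
  have hq2 : Differentiable ℝ (deriv q) :=
    (ContDiff.deriv' (n := 1) hq).differentiable one_ne_zero
  set f : ℝ → ℝ := fun t => ⟪q t - σ, deriv q t⟫
  have hf : ∀ t, HasDerivAt f (‖deriv q t‖ ^ 2 + ⟪gradient V (q t), q t - σ⟫) t := fun t => by
    have := ((hq1 t).hasDerivAt.sub_const σ).inner ℝ (hode t ▸ (hq2 t).hasDerivAt)
    rwa [real_inner_self_eq_norm_sq, real_inner_comm, add_comm] at this
  have hf' : ∀ t, 0 ≤ ‖deriv q t‖ ^ 2 + ⟪gradient V (q t), q t - σ⟫ := fun t =>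
    add_nonneg (sq_nonneg _) (hV _ (hqr t))
  have hmono : Monotone f := monotone_of_deriv_nonneg (fun t => (hf t).differentiableAt)
    (fun t => (hf t).deriv ▸ hf' t)
  have hf2 : Integrable (fun t => f t ^ 2) := by
    refine (hq'.const_mul (r ^ 2)).mono'
      ((continuous_iff_continuousAt.mpr fun t => (hf t).continuousAt).pow 2).aestronglyMeasurable
      (ae_of_all _ fun t => ?_)
    have hCS := abs_real_inner_le_norm (q t - σ) (deriv q t)
    have hqσ : ‖q t - σ‖ ≤ r := mem_closedBall_iff_norm.mp (hqr t)
    rw [Real.norm_eq_abs, abs_of_nonneg (sq_nonneg _), ← sq_abs, ← mul_pow]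
    gcongr
    exact hCS.trans (by gcongr)
  have hq'0 : ∀ t, deriv q t = 0 := fun t => by
    have hderiv := (hf t).deriv
    rw [show f = fun _ => 0 from funext (hmono.eq_zero_of_integrable_sq hf2), deriv_const] at hderiv
    have := hV _ (hqr t)
    exact norm_eq_zero.mp (pow_eq_zero_iff two_ne_zero |>.mp (by linarith [sq_nonneg ‖deriv q t‖]))
  exact is_const_of_deriv_eq_zero hq1 hq'0 s t

end Trapped

section Energy

variable {V : EuclideanSpace ℝ (Fin k) → ℝ} {q : ℝ → EuclideanSpace ℝ (Fin k)}

theorem FiniteEnergy.integrable_norm_deriv_sq (hVnn : ∀ u, 0 ≤ V u) (hE : FiniteEnergy V q) :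
    Integrable (fun t => ‖deriv q t‖ ^ 2) := by
  refine (hE.const_mul 2).mono' ((measurable_deriv q).norm.pow_const 2).aestronglyMeasurable
    (ae_of_all _ fun t => ?_)
  rw [Real.norm_eq_abs, abs_of_nonneg (sq_nonneg _), Ed]
  linarith [hVnn (q t)]

-- Modica–Mortola: `½|q'|² + δ ≥ √(2δ) |q'|`, integrated against `|q b - q a| ≤ ∫ₐᵇ |q'|`.
theorem sqrt_two_mul_norm_sub_le_energy (hVnn : ∀ u, 0 ≤ V u) (hq : AC q)
    (hE : FiniteEnergy V q) {a b δ : ℝ} (hab : a ≤ b) (hδ : 0 ≤ δ)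
    (hVδ : ∀ t ∈ Set.Ioc a b, δ ≤ V (q t)) :
    √(2 * δ) * ‖q b - q a‖ ≤ Energy V q := by
  have hq'int : IntegrableOn (fun t => ‖deriv q t‖) (Set.Ioc a b) :=
    ((hq.1.integrableOn_isCompact isCompact_Icc).mono_set Set.Ioc_subset_Icc_self).norm
  have hdisp : ‖q b - q a‖ ≤ ∫ t in Set.Ioc a b, ‖deriv q t‖ := by
    rw [hq.2 a b, ← Set.uIoc_of_le hab]
    exact norm_integral_le_integral_norm_uIoc
  have hpoint : ∀ t ∈ Set.Ioc a b, √(2 * δ) * ‖deriv q t‖ ≤ Ed V q t := fun t ht => by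
    unfold Ed
    nlinarith [hVδ t ht, sq_nonneg (‖deriv q t‖ - √(2 * δ)),
      Real.sq_sqrt (by positivity : 0 ≤ 2 * δ)]
  calc √(2 * δ) * ‖q b - q a‖ ≤ √(2 * δ) * ∫ t in Set.Ioc a b, ‖deriv q t‖ := by gcongr
    _ = ∫ t in Set.Ioc a b, √(2 * δ) * ‖deriv q t‖ := (MeasureTheory.integral_const_mul _ _).symm
    _ ≤ ∫ t in Set.Ioc a b, Ed V q t :=
      setIntegral_mono_on (hq'int.const_mul _) hE.integrableOn measurableSet_Ioc hpoint
    _ ≤ Energy V q :=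
      setIntegral_le_integral hE (ae_of_all _ fun t => by unfold Ed; positivity [hVnn (q t)])

end Energy

theorem exists_pos_le_energy_of_tendsto_atBot {V : EuclideanSpace ℝ (Fin k) → ℝ}
    (hV : ContDiff ℝ 2 V) (hVnn : ∀ u, 0 ≤ V u) {σ : EuclideanSpace ℝ (Fin k)} (hσ : V σ = 0)
    (hσiso : ∀ᶠ u in 𝓝[≠] σ, V u ≠ 0)
    (hhess : ∀ v ≠ 0, 0 < iteratedFDeriv ℝ 2 V σ ![v, v]) :
    ∃ e > 0, ∀ q : ℝ → EuclideanSpace ℝ (Fin k), AC q → FiniteEnergy V q →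
      Tendsto q atBot (𝓝 σ) → ContDiff ℝ 2 q →
      (∀ t, deriv (deriv q) t = gradient V (q t)) →
      e ≤ Energy V q ∨ ∀ s t, q s = q t := by
  obtain ⟨r₁, hr₁, hgrad⟩ := exists_inner_gradient_sub_nonneg hV
    (.of_forall fun u => hσ ▸ hVnn u) hhess
  obtain ⟨r₂, hr₂, hiso⟩ := Metric.mem_nhdsWithin_iff.mp hσiso
  set r := min r₁ (r₂ / 2)
  have hr : 0 < r := lt_min hr₁ (half_pos hr₂)
  set K := Metric.closedBall σ r \ Metric.ball σ (r / 2)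
  have hVK : ∀ u ∈ K, 0 < V u := fun u ⟨hu, hu'⟩ => by
    rw [Metric.mem_closedBall] at hu
    rw [Metric.mem_ball, not_lt] at hu'
    refine (hVnn u).lt_of_ne' (hiso ⟨?_, ?_⟩)
    · exact Metric.mem_ball.mpr (hu.trans_lt ((min_le_right _ _).trans_lt (half_lt_self hr₂)))
    · rintro rfl
      exact (half_pos hr).not_ge (dist_self u ▸ hu')
  obtain ⟨δ, hδ, hVδ⟩ := ((isCompact_closedBall σ r).diff Metric.isOpen_ball).exists_forall_le'
    hV.continuous.continuousOn hVK
  refine ⟨√(2 * δ) * (r / 2), by positivity, fun q hq hE hbot hq2 hode => ?_⟩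
  refine or_iff_not_imp_right.mpr fun hnc => ?_
  obtain ⟨t₁, ht₁⟩ : ∃ t₁, r ≤ dist (q t₁) σ := by
    by_contra! h
    exact hnc (is_const_of_forall_mem_closedBall hq2 hode
      (hE.integrable_norm_deriv_sq hVnn) (fun u hu => hgrad u (Metric.closedBall_subset_closedBall
        (min_le_left _ _) hu)) fun t => Metric.mem_closedBall.mpr (h t).le)
  obtain ⟨t₀, ht₀, ht₀₁⟩ := ((hbot.eventually (Metric.closedBall_mem_nhds σ (half_pos hr))).and
    (eventually_le_atBot t₁)).exists
  obtain ⟨a, b, hab, hga, hgb, hK⟩ := Continuous.exists_Icc_mapsTo_Icc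
    (g := fun t => dist (q t) σ) (hq2.continuous.dist continuous_const) ht₀₁
    (half_le_self hr.le) ht₀ ht₁
  calc √(2 * δ) * (r / 2) = √(2 * δ) * (dist (q b) σ - dist (q a) σ) := by
        rw [hga, hgb]; ring
    _ ≤ √(2 * δ) * ‖q b - q a‖ := by
        gcongr
        linarith [dist_triangle (q b) (q a) σ, dist_eq_norm (q b) (q a)]
    _ ≤ Energy V q := sqrt_two_mul_norm_sub_le_energy hVnn hq hE hab hδ.le fun t ht =>
        hVδ _ ⟨Metric.mem_closedBall.mpr (hK (Set.Ioc_subset_Icc_self ht)).2,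
          fun h => (Metric.mem_ball.mp h).not_ge (hK (Set.Ioc_subset_Icc_self ht)).1⟩

theorem stmt_15_general (V : EuclideanSpace ℝ (Fin k) → ℝ)
    (hV : ContDiff ℝ 2 V) (hVnn : ∀ u, 0 ≤ V u)
    (S : Set (EuclideanSpace ℝ (Fin k))) (hSfin : S.Finite)
    (hSzero : ∀ u, V u = 0 ↔ u ∈ S)
    (hhess : ∀ σ ∈ S, ∀ u : EuclideanSpace ℝ (Fin k), u ≠ 0 →
      0 < iteratedFDeriv ℝ 2 V σ ![u, u]) :
    ∃ η > (0 : ℝ), ∀ σi ∈ S, ∀ σj ∈ S, ∀ q : ℝ → EuclideanSpace ℝ (Fin k),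
      InX V σi σj q → ContDiff ℝ 2 q →
      (∀ t : ℝ, deriv (deriv q) t = gradient V (q t)) →
      η ≤ Energy V q ∨ ∀ s t : ℝ, q s = q t := by
  have hiso : ∀ σ ∈ S, ∀ᶠ u in 𝓝[≠] σ, V u ≠ 0 := fun σ _ => by
    have : (S \ {σ})ᶜ ∈ 𝓝 σ := hSfin.sdiff.isClosed.isOpen_compl.mem_nhds (by simp)
    filter_upwards [nhdsWithin_le_nhds this, self_mem_nhdsWithin] with u hu hne
    exact fun h0 => hu ⟨(hSzero u).mp h0, hne⟩
  choose! e he hle using fun σ (hσ : σ ∈ S) =>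
    exists_pos_le_energy_of_tendsto_atBot hV hVnn ((hSzero σ).mpr hσ) (hiso σ hσ) (hhess σ hσ)
  have hsmall : ∀ᶠ η in 𝓝[>] (0 : ℝ), ∀ σ ∈ S, η ≤ e σ :=
    (eventually_all_finite hSfin).mpr fun σ hσ =>
      mem_of_superset (Ioc_mem_nhdsGT (he σ hσ)) fun _ hη => hη.2
  obtain ⟨η, hη, hη₀⟩ := (hsmall.and self_mem_nhdsWithin).exists
  exact ⟨η, hη₀, fun σi hσi _ _ q hq hq2 hode =>
    (hle σi hσi q hq.1 hq.2.1 hq.2.2.1 hq2 hode).imp_left (hη σi hσi).trans⟩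

theorem stmt_15 (V : EuclideanSpace ℝ (Fin k) → ℝ)
    (hV : ContDiff ℝ 2 V) (hVnn : ∀ u, 0 ≤ V u)
    (S : Set (EuclideanSpace ℝ (Fin k))) (hSfin : S.Finite)
    (hSzero : ∀ u, V u = 0 ↔ u ∈ S)
    (hhess : ∀ σ ∈ S, ∀ u : EuclideanSpace ℝ (Fin k), u ≠ 0 →
      0 < iteratedFDeriv ℝ 2 V σ ![u, u])
    (α₀ β₀ R₀ : ℝ) (hα₀ : 0 < α₀) (hβ₀ : 0 < β₀) (hR₀ : 0 < R₀)
    (hcoer : ∀ u : EuclideanSpace ℝ (Fin k), R₀ ≤ ‖u‖ →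
      α₀ * ‖u‖ ^ 2 ≤ ⟪gradient V u, u⟫ ∧ β₀ ≤ V u) :
    ∃ η > (0 : ℝ), ∀ σi ∈ S, ∀ σj ∈ S, ∀ q : ℝ → EuclideanSpace ℝ (Fin k),
      InX V σi σj q → ContDiff ℝ 2 q →
      (∀ t : ℝ, deriv (deriv q) t = gradient V (q t)) →
      η ≤ Energy V q ∨ ∀ s t : ℝ, q s = q t :=
  stmt_15_general V hV hVnn S hSfin hSzero hhess
end
end

section
/- Let C < 𝔪* := min{𝔪_{σ⁻σ} + 𝔪_{σσ⁺} : σ ∈ Σ \ {σ⁻, σ⁺}}. Then there exists ρ₂ = ρ₂(C) > 0, depending only on V and C, such that every q ∈ X(σ⁻, σ⁺) with E(q) ≤ C satisfies |q(t) - σ| ≥ ρ₂ for all t ∈ ℝ and all σ ∈ Σ \ {σ⁻, σ⁺}. -/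
open MeasureTheory Filter intervalIntegral
open scoped RealInnerProductSpace Topology

noncomputable section

variable {k : ℕ}

/-- `𝔪_{σᵢσⱼ}`, the infimum of the energy over `X(σᵢ, σⱼ)`. -/
def mVal (V : EuclideanSpace ℝ (Fin k) → ℝ) (σi σj : EuclideanSpace ℝ (Fin k)) : ℝ :=
  sInf (Energy V '' {q | InX V σi σj q})

/-! If `q` passes within `ρ` of a third zero `σ` at time `t₀`, cut `q` at `t₀` and join `q t₀` to
`σ` by a straight segment run in unit time (and then stay at `σ`); doing this on both sides of `t₀`
gives a curve in `X(σ⁻, σ)` and one in `X(σ, σ⁺)` whose energies add up to at most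
`E(q) + ρ² + 2 sup V`, the supremum being over the segment `[q t₀, σ]`. Since `V` vanishes on the
finite set `Σ`, this sup is uniformly small once `ρ` is, so `𝔪_{σ⁻σ} + 𝔪_{σσ⁺} ≤ C + o(1)`,
contradicting `C < 𝔪*`. -/

open Set

section Glue

variable {E : Type*} {f g : ℝ → E} {t₀ t : ℝ}

def glue (f g : ℝ → E) (t₀ : ℝ) : ℝ → E := fun t => if t ≤ t₀ then f t else g t

lemma glue_of_le (h : t ≤ t₀) : glue f g t₀ t = f t := if_pos h

lemma glue_of_lt (h : t₀ < t) : glue f g t₀ t = g t := if_neg (not_le.2 h)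

variable [NormedAddCommGroup E] [NormedSpace ℝ E]

lemma deriv_glue_of_lt (h : t < t₀) : deriv (glue f g t₀) t = deriv f t :=
  Filter.EventuallyEq.deriv_eq ((eventually_lt_nhds h).mono fun _ hs => glue_of_le hs.le)

lemma deriv_glue_of_gt (h : t₀ < t) : deriv (glue f g t₀) t = deriv g t :=
  Filter.EventuallyEq.deriv_eq ((eventually_gt_nhds h).mono fun _ hs => glue_of_lt hs)

open Classical in
lemma deriv_glue_ae :
    deriv (glue f g t₀) =ᵐ[volume] (Iic t₀).piecewise (deriv f) (deriv g) := by
  filter_upwards [volume.ae_ne t₀] with t ht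
  rcases ht.lt_or_gt with h | h
  · rw [deriv_glue_of_lt h, piecewise_eq_of_mem _ _ _ (mem_Iic.2 h.le)]
  · rw [deriv_glue_of_gt h, piecewise_eq_of_notMem _ _ _ (notMem_Iic.2 h)]

end Glue

section AbsolutelyContinuous

variable {q f g : ℝ → EuclideanSpace ℝ (Fin k)} {t₀ : ℝ}

lemma MeasureTheory.LocallyIntegrable.intervalIntegrable {F : Type*} [NormedAddCommGroup F]
    {f : ℝ → F} (hf : LocallyIntegrable f volume) (a b : ℝ) : IntervalIntegrable f volume a b :=
  (hf.integrableOn_isCompact isCompact_uIcc).intervalIntegrable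

lemma ac_of_sub_eq_integral (hloc : LocallyIntegrable (deriv q) volume)
    (h : ∀ t, q t - q t₀ = ∫ s in t₀..t, deriv q s) : AC q := by
  refine ⟨hloc, fun a b => ?_⟩
  rw [← integral_interval_sub_left (hloc.intervalIntegrable t₀ b) (hloc.intervalIntegrable t₀ a),
    ← h, ← h]
  abel

lemma ac_of_contDiff (hq : ContDiff ℝ 1 q) : AC q :=
  ⟨(hq.continuous_deriv le_rfl).locallyIntegrable, fun a b =>
    (integral_deriv_eq_sub (fun _ _ => (hq.differentiable one_ne_zero).differentiableAt)
      ((hq.continuous_deriv le_rfl).intervalIntegrable a b)).symm⟩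

open Classical in
lemma AC.glue (hf : AC f) (hg : AC g) (h : f t₀ = g t₀) : AC (glue f g t₀) := by
  have hderiv := deriv_glue_ae (f := f) (g := g) (t₀ := t₀)
  have hloc : LocallyIntegrable ((Iic t₀).piecewise (deriv f) (deriv g)) volume := by
    rw [← indicator_add_compl_eq_piecewise]
    exact (hf.1.indicator measurableSet_Iic).add (hg.1.indicator measurableSet_Iic.compl)
  refine ac_of_sub_eq_integral (hloc.congr hderiv.symm) (t₀ := t₀) fun t => ?_
  rw [integral_congr_ae (hderiv.mono fun _ h _ => h), glue_of_le le_rfl]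
  rcases le_or_gt t t₀ with ht | ht
  · rw [glue_of_le ht, hf.2]
    refine integral_congr_ae (Eventually.of_forall fun s hs => ?_)
    rw [uIoc_of_ge ht] at hs
    exact (piecewise_eq_of_mem _ _ _ (mem_Iic.2 hs.2)).symm
  · rw [glue_of_lt ht, h, hg.2]
    refine integral_congr_ae (Eventually.of_forall fun s hs => ?_)
    rw [uIoc_of_le ht.le] at hs
    exact (piecewise_eq_of_notMem _ _ _ (notMem_Iic.2 hs.1)).symm

lemma AC.comp_neg (hq : AC q) : AC (fun t => q (-t)) := by
  have hderiv : deriv (fun t => q (-t)) = fun t => -deriv q (-t) := funext (deriv_comp_neg q)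
  refine ⟨?_, fun a b => ?_⟩
  · have h := (locallyIntegrable_map_homeomorph (Homeomorph.neg ℝ)).1
      ((Measure.map_neg_eq_self (volume : Measure ℝ)).symm ▸ hq.1)
    exact hderiv ▸ h.neg
  · rw [hderiv, intervalIntegral.integral_neg, intervalIntegral.integral_comp_neg (deriv q),
      ← hq.2]
    abel

end AbsolutelyContinuous

section Energy

variable {V : EuclideanSpace ℝ (Fin k) → ℝ} {q f g : ℝ → EuclideanSpace ℝ (Fin k)}
  {a b p σ : EuclideanSpace ℝ (Fin k)} {t₀ t η : ℝ}

lemma energy_nonneg (hVnn : ∀ u, 0 ≤ V u) (q : ℝ → EuclideanSpace ℝ (Fin k)) :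
    0 ≤ Energy V q :=
  integral_nonneg fun _ => add_nonneg (by positivity) (hVnn _)

lemma mVal_nonneg (hVnn : ∀ u, 0 ≤ V u) (a b : EuclideanSpace ℝ (Fin k)) : 0 ≤ mVal V a b :=
  Real.sInf_nonneg (by rintro _ ⟨q, -, rfl⟩; exact energy_nonneg hVnn q)

lemma mVal_le_energy (hVnn : ∀ u, 0 ≤ V u) (hq : InX V a b q) : mVal V a b ≤ Energy V q :=
  csInf_le ⟨0, by rintro _ ⟨q, -, rfl⟩; exact energy_nonneg hVnn q⟩ ⟨q, hq, rfl⟩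

lemma Ed_comp_neg (V : EuclideanSpace ℝ (Fin k) → ℝ) (q : ℝ → EuclideanSpace ℝ (Fin k)) (t : ℝ) :
    Ed V (fun s => q (-s)) t = Ed V q (-t) := by
  simp [Ed, deriv_comp_neg]

lemma energy_comp_neg : Energy V (fun s => q (-s)) = Energy V q := by
  simp only [Energy, Ed_comp_neg]
  exact integral_neg_eq_self _ _

lemma InX.comp_neg (hq : InX V a b q) : InX V b a (fun t => q (-t)) :=
  ⟨hq.1.comp_neg, by simpa only [FiniteEnergy, ← Ed_comp_neg] using hq.2.1.comp_neg,
    hq.2.2.2.comp tendsto_neg_atBot_atTop, hq.2.2.1.comp tendsto_neg_atTop_atBot⟩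

lemma Ed_glue_of_lt (h : t < t₀) : Ed V (glue f g t₀) t = Ed V f t := by
  rw [Ed, Ed, deriv_glue_of_lt h, glue_of_le h.le]

lemma Ed_glue_of_gt (h : t₀ < t) : Ed V (glue f g t₀) t = Ed V g t := by
  rw [Ed, Ed, deriv_glue_of_gt h, glue_of_lt h]

def segmentPath (p σ : EuclideanSpace ℝ (Fin k)) (t₀ : ℝ) : ℝ → EuclideanSpace ℝ (Fin k) :=
  fun t => p + (t - t₀) • (σ - p)

lemma contDiff_segmentPath : ContDiff ℝ 1 (segmentPath p σ t₀) := by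
  unfold segmentPath; fun_prop

lemma Ed_segmentPath :
    Ed V (segmentPath p σ t₀) = fun t => 1 / 2 * ‖σ - p‖ ^ 2 + V (segmentPath p σ t₀ t) := by
  have hderiv (t : ℝ) : HasDerivAt (segmentPath p σ t₀) (σ - p) t := by
    unfold segmentPath
    simpa using (((hasDerivAt_id t).sub_const t₀).smul_const (σ - p)).const_add p
  ext t
  rw [Ed, (hderiv t).deriv]

lemma segmentPath_mem_segment (ht : t ∈ Icc t₀ (t₀ + 1)) :
    segmentPath p σ t₀ t ∈ segment ℝ p σ := by
  rw [segment_eq_image']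
  exact ⟨t - t₀, ⟨by linarith [ht.1], by linarith [ht.2]⟩, rfl⟩

lemma integrableOn_Ed_segmentPath (hVc : Continuous V) :
    IntegrableOn (Ed V (segmentPath p σ t₀)) (Ioc t₀ (t₀ + 1)) volume := by
  rw [Ed_segmentPath]
  exact (continuous_const.add (hVc.comp contDiff_segmentPath.continuous)).integrableOn_Ioc

lemma setIntegral_Ed_segmentPath_le (hVc : Continuous V) (hη : ∀ u ∈ segment ℝ p σ, V u ≤ η) :
    ∫ t in Ioc t₀ (t₀ + 1), Ed V (segmentPath p σ t₀) t ≤ 1 / 2 * ‖p - σ‖ ^ 2 + η := by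
  calc ∫ t in Ioc t₀ (t₀ + 1), Ed V (segmentPath p σ t₀) t
      ≤ ∫ _ in Ioc t₀ (t₀ + 1), (1 / 2 * ‖p - σ‖ ^ 2 + η) := by
        refine setIntegral_mono_on (integrableOn_Ed_segmentPath hVc)
          (integrableOn_const measure_Ioc_lt_top.ne) measurableSet_Ioc fun t ht => ?_
        simp only [Ed_segmentPath, norm_sub_rev σ p]
        gcongr
        exact hη _ (segmentPath_mem_segment (Ioc_subset_Icc_self ht))
    _ = 1 / 2 * ‖p - σ‖ ^ 2 + η := by simp

def spliceTo (q : ℝ → EuclideanSpace ℝ (Fin k)) (t₀ : ℝ) (σ : EuclideanSpace ℝ (Fin k)) :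
    ℝ → EuclideanSpace ℝ (Fin k) :=
  glue q (glue (segmentPath (q t₀) σ t₀) (fun _ => σ) (t₀ + 1)) t₀

lemma spliceTo_of_le (h : t ≤ t₀) : spliceTo q t₀ σ t = q t := glue_of_le h

lemma spliceTo_of_gt (h : t₀ + 1 < t) : spliceTo q t₀ σ t = σ := by
  rw [spliceTo, glue_of_lt (by linarith), glue_of_lt h]

lemma AC.spliceTo (hq : AC q) : AC (spliceTo q t₀ σ) :=
  hq.glue ((ac_of_contDiff contDiff_segmentPath).glue (ac_of_contDiff contDiff_const)
    (by simp [segmentPath])) (by simp [glue_of_le, segmentPath])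

lemma Ed_spliceTo_ae (hσ : V σ = 0) :
    Ed V (spliceTo q t₀ σ) =ᵐ[volume] (Iic t₀).indicator (Ed V q) +
      (Ioc t₀ (t₀ + 1)).indicator (Ed V (segmentPath (q t₀) σ t₀)) := by
  filter_upwards [volume.ae_ne t₀, volume.ae_ne (t₀ + 1)] with t h₀ h₁
  rcases h₀.lt_or_gt with ht | ht
  · rw [spliceTo, Ed_glue_of_lt ht]
    simp [ht.le, not_lt.2 ht.le]
  rcases h₁.lt_or_gt with ht' | ht'
  · rw [spliceTo, Ed_glue_of_gt ht, Ed_glue_of_lt ht']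
    simp [ht, ht'.le, not_le.2 ht]
  · rw [spliceTo, Ed_glue_of_gt ht, Ed_glue_of_gt ht']
    simp [Ed, hσ, not_le.2 ht, not_le.2 ht']

lemma FiniteEnergy.spliceTo (hVc : Continuous V) (hσ : V σ = 0) (hq : FiniteEnergy V q) :
    FiniteEnergy V (spliceTo q t₀ σ) :=
  ((hq.indicator measurableSet_Iic).add
    ((integrableOn_Ed_segmentPath hVc).integrable_indicator measurableSet_Ioc)).congr
    (Ed_spliceTo_ae hσ).symm

lemma energy_spliceTo_le (hVc : Continuous V) (hσ : V σ = 0) (hq : FiniteEnergy V q)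
    (hη : ∀ u ∈ segment ℝ (q t₀) σ, V u ≤ η) :
    Energy V (spliceTo q t₀ σ) ≤ (∫ t in Iic t₀, Ed V q t) + (1 / 2 * ‖q t₀ - σ‖ ^ 2 + η) := by
  rw [Energy, integral_congr_ae (Ed_spliceTo_ae hσ),
    integral_add' (hq.indicator measurableSet_Iic)
      ((integrableOn_Ed_segmentPath hVc).integrable_indicator measurableSet_Ioc),
    MeasureTheory.integral_indicator measurableSet_Iic,
    MeasureTheory.integral_indicator measurableSet_Ioc]
  exact add_le_add le_rfl (setIntegral_Ed_segmentPath_le hVc hη)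

lemma InX.spliceTo (hVc : Continuous V) (hσ : V σ = 0) (hq : InX V a b q) (t₀ : ℝ) :
    InX V a σ (spliceTo q t₀ σ) := by
  refine ⟨hq.1.spliceTo, hq.2.1.spliceTo hVc hσ, ?_, ?_⟩
  · refine hq.2.2.1.congr' ?_
    filter_upwards [eventually_le_atBot t₀] with t ht
    exact (spliceTo_of_le ht).symm
  · refine tendsto_const_nhds.congr' ?_
    filter_upwards [eventually_gt_atTop (t₀ + 1)] with t ht
    exact (spliceTo_of_gt ht).symm

theorem mVal_add_mVal_le (hVnn : ∀ u, 0 ≤ V u) (hVc : Continuous V) (hσ : V σ = 0)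
    (hq : InX V a b q) (hη : ∀ u ∈ segment ℝ (q t₀) σ, V u ≤ η) :
    mVal V a σ + mVal V σ b ≤ Energy V q + ‖q t₀ - σ‖ ^ 2 + 2 * η := by
  have hleft : mVal V a σ ≤ (∫ t in Iic t₀, Ed V q t) + (1 / 2 * ‖q t₀ - σ‖ ^ 2 + η) :=
    (mVal_le_energy hVnn (hq.spliceTo hVc hσ t₀)).trans (energy_spliceTo_le hVc hσ hq.2.1 hη)
  have hright : mVal V σ b ≤ (∫ t in Ioi t₀, Ed V q t) + (1 / 2 * ‖q t₀ - σ‖ ^ 2 + η) := by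
    set r := fun t => q (-t)
    have hr : InX V b a r := hq.comp_neg
    calc mVal V σ b ≤ Energy V (fun t => spliceTo r (-t₀) σ (-t)) :=
          mVal_le_energy hVnn (hr.spliceTo hVc hσ (-t₀)).comp_neg
      _ = Energy V (spliceTo r (-t₀) σ) := energy_comp_neg
      _ ≤ (∫ t in Iic (-t₀), Ed V r t) + (1 / 2 * ‖r (-t₀) - σ‖ ^ 2 + η) :=
          energy_spliceTo_le hVc hσ hr.2.1 (by simpa [r] using hη)
      _ = (∫ t in Ioi t₀, Ed V q t) + (1 / 2 * ‖q t₀ - σ‖ ^ 2 + η) := by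
          simp only [r, Ed_comp_neg, neg_neg]
          rw [integral_comp_neg_Iic, neg_neg]
  have hsplit := integral_Iic_add_Ioi (b := t₀) hq.2.1.integrableOn hq.2.1.integrableOn
  rw [← Energy] at hsplit
  linarith

end Energy

theorem stmt_16_general (V : EuclideanSpace ℝ (Fin k) → ℝ)
    (hV : ContDiff ℝ 2 V) (hVnn : ∀ u, 0 ≤ V u)
    (S : Set (EuclideanSpace ℝ (Fin k))) (hSfin : S.Finite)
    (hSzero : ∀ u, V u = 0 ↔ u ∈ S)
    (σm σp : EuclideanSpace ℝ (Fin k))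
    (C : ℝ)
    (hC : C < sInf ((fun σ => mVal V σm σ + mVal V σ σp) '' (S \ {σm, σp}))) :
    ∃ ρ₂ > (0 : ℝ), ∀ q : ℝ → EuclideanSpace ℝ (Fin k),
      InX V σm σp q → Energy V q ≤ C →
      ∀ σ ∈ S \ {σm, σp}, ∀ t : ℝ, ρ₂ ≤ ‖q t - σ‖ := by
  set M := sInf ((fun σ => mVal V σm σ + mVal V σ σp) '' (S \ {σm, σp}))
  have hε : 0 < M - C := sub_pos.2 hC
  have hVc : Continuous V := hV.continuous
  obtain ⟨δ, hδ, hδS⟩ := hSfin.isCompact.exists_thickening_subset_open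
    (isOpen_lt hVc continuous_const) fun σ hσ => show V σ < (M - C) / 4 by
      rw [(hSzero σ).2 hσ]; positivity
  refine ⟨min δ (min 1 ((M - C) / 4)), by positivity, fun q hq hE σ hσ t => ?_⟩
  by_contra! hclose
  have hρ : ‖q t - σ‖ < δ ∧ ‖q t - σ‖ < 1 ∧ ‖q t - σ‖ < (M - C) / 4 := by
    simpa only [lt_min_iff] using hclose
  have hseg : ∀ u ∈ segment ℝ (q t) σ, V u ≤ (M - C) / 4 := fun u hu =>
    (hδS (Metric.ball_subset_thickening hσ.1 δ ((convex_ball σ δ).segment_subset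
      (mem_ball_iff_norm.2 hρ.1) (Metric.mem_ball_self hδ) hu))).le
  have hM : M ≤ mVal V σm σ + mVal V σ σp := by
    refine csInf_le ⟨0, ?_⟩ (mem_image_of_mem _ hσ)
    rintro _ ⟨τ, -, rfl⟩
    exact add_nonneg (mVal_nonneg hVnn _ _) (mVal_nonneg hVnn _ _)
  have hcut := mVal_add_mVal_le hVnn hVc ((hSzero σ).2 hσ.1) hq hseg
  nlinarith [mul_le_of_le_one_left (norm_nonneg (q t - σ)) hρ.2.1.le]

theorem stmt_16 (V : EuclideanSpace ℝ (Fin k) → ℝ)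
    (hV : ContDiff ℝ 2 V) (hVnn : ∀ u, 0 ≤ V u)
    (S : Set (EuclideanSpace ℝ (Fin k))) (hSfin : S.Finite)
    (hSzero : ∀ u, V u = 0 ↔ u ∈ S)
    (hhess : ∀ σ ∈ S, ∀ u : EuclideanSpace ℝ (Fin k), u ≠ 0 →
      0 < iteratedFDeriv ℝ 2 V σ ![u, u])
    (α₀ β₀ R₀ : ℝ) (hα₀ : 0 < α₀) (hβ₀ : 0 < β₀) (hR₀ : 0 < R₀)
    (hcoer : ∀ u : EuclideanSpace ℝ (Fin k), R₀ ≤ ‖u‖ →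
      α₀ * ‖u‖ ^ 2 ≤ ⟪gradient V u, u⟫ ∧ β₀ ≤ V u)
    (σm σp : EuclideanSpace ℝ (Fin k)) (hσm : σm ∈ S) (hσp : σp ∈ S) (hne : σm ≠ σp)
    (hthree : (S \ {σm, σp}).Nonempty)
    (C : ℝ)
    (hC : C < sInf ((fun σ => mVal V σm σ + mVal V σ σp) '' (S \ {σm, σp}))) :
    ∃ ρ₂ > (0 : ℝ), ∀ q : ℝ → EuclideanSpace ℝ (Fin k),
      InX V σm σp q → Energy V q ≤ C →
      ∀ σ ∈ S \ {σm, σp}, ∀ t : ℝ, ρ₂ ≤ ‖q t - σ‖ :=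
  stmt_16_general V hV hVnn S hSfin hSzero σm σp C hC
end
end
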